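/- arXiv:2211.12943 — 3 statements merged into one kernel-verified Lean document; each statement's English description precedes it below -/
import Mathlib

section
/- Assume N ≥ 5 and that V1, V2 satisfy (A1) and (A2). Then for j = 1, 2: (a) lim_{δ→0⁺} sup{∫ V_j(x) ϑ_{δ,y}(x)² dx : y ∈ ℝ^N} = 0; (b) lim_{δ→∞} sup{∫ V_j(x) ϑ_{δ,y}(x)² dx : y ∈ ℝ^N} = 0; (c) lim_{r→∞} sup{∫ V_j(x) ϑ_{δ,y}(x)² dx : y ∈ ℝ^N, |y| = r, δ > 0} = 0. -/
open MeasureTheory Metric Filter Topology RealInnerProductSpace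

noncomputable section

abbrev RN (N : ℕ) := EuclideanSpace ℝ (Fin N)

variable {N : ℕ}

/-- Positive part `u⁺ = max (u x) 0`. -/
def posp (u : RN N → ℝ) : RN N → ℝ := fun x => max (u x) 0

/-- Riesz-type convolution `(|x|^{-4} * w)(x) = ∫ w(y) |x-y|^{-4} dy`. -/
def riesz4 (w : RN N → ℝ) (x : RN N) : ℝ := ∫ y, w y / ‖x - y‖ ^ 4

/-- Pointwise Laplacian. -/
def lap (u : RN N → ℝ) (x : RN N) : ℝ :=
  ∑ i, iteratedFDeriv ℝ 2 u x (fun _ => EuclideanSpace.single i 1)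

/-- Membership in `H¹(ℝ^N)`. -/
def MemH1 (u : RN N → ℝ) : Prop :=
  Differentiable ℝ u ∧ MemLp u 2 volume ∧
    MemLp (fun x => ‖gradient u x‖) 2 volume

/-- Membership in `D^{1,2}(ℝ^N)`. -/
def MemD12 (u : RN N → ℝ) : Prop :=
  Differentiable ℝ u ∧ MemLp u (ENNReal.ofReal (2 * N / (N - 2))) volume ∧
    MemLp (fun x => ‖gradient u x‖) 2 volume

/-- Membership in the space `H` which depends on the sign of `λ₁, λ₂`. -/
def MemHpair (l1 l2 : ℝ) (u v : RN N → ℝ) : Prop :=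
  (if 0 < l1 then MemH1 u else MemD12 u) ∧ (if 0 < l2 then MemH1 v else MemD12 v)

/-- squared H-norm -/
def normHsq (l1 l2 : ℝ) (u v : RN N → ℝ) : ℝ :=
  ∫ x, (‖gradient u x‖ ^ 2 + l1 * u x ^ 2 + ‖gradient v x‖ ^ 2 + l2 * v x ^ 2)

/-- quadratic part -/
def gradQuad (V1 V2 : RN N → ℝ) (l1 l2 : ℝ) (u v : RN N → ℝ) : ℝ :=
  ∫ x, (‖gradient u x‖ ^ 2 + ‖gradient v x‖ ^ 2
    + (V1 x + l1) * u x ^ 2 + (V2 x + l2) * v x ^ 2)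

/-- quartic nonlocal part -/
def quart (μ1 μ2 β : ℝ) (u v : RN N → ℝ) : ℝ :=
  ∫ x, ∫ y, (μ1 * posp u x ^ 2 * posp u y ^ 2
    + 2 * β * posp u x ^ 2 * posp v y ^ 2
    + μ2 * posp v x ^ 2 * posp v y ^ 2) / ‖x - y‖ ^ 4

/-- the energy functional `I` -/
def energy (V1 V2 : RN N → ℝ) (l1 l2 μ1 μ2 β : ℝ) (u v : RN N → ℝ) : ℝ :=
  gradQuad V1 V2 l1 l2 u v / 2 - quart μ1 μ2 β u v / 4

/-- membership in the Nehari manifold 𝒩 -/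
def NehariMem (V1 V2 : RN N → ℝ) (l1 l2 μ1 μ2 β : ℝ) (u v : RN N → ℝ) : Prop :=
  MemHpair l1 l2 u v ∧ ¬(u =ᵐ[volume] 0 ∧ v =ᵐ[volume] 0) ∧
    gradQuad V1 V2 l1 l2 u v = quart μ1 μ2 β u v

/-- quadratic part of `⟨I'(u,v),(φ,ψ)⟩` -/
def quadPairing (V1 V2 : RN N → ℝ) (l1 l2 : ℝ) (u v φ ψ : RN N → ℝ) : ℝ :=
  ∫ x, (⟪gradient u x, gradient φ x⟫ + ⟪gradient v x, gradient ψ x⟫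
    + (V1 x + l1) * (u x * φ x) + (V2 x + l2) * (v x * ψ x))

/-- quartic part of `⟨I'(u,v),(φ,ψ)⟩` -/
def quartPairing (μ1 μ2 β : ℝ) (u v φ ψ : RN N → ℝ) : ℝ :=
  ∫ x, ∫ y, (μ1 * posp u x ^ 2 * posp u y * φ y
    + β * posp v x ^ 2 * posp u y * φ y
    + β * posp u x ^ 2 * posp v y * ψ y
    + μ2 * posp v x ^ 2 * posp v y * ψ y) / ‖x - y‖ ^ 4

/-- `⟨I'(u,v),(φ,ψ)⟩` -/
def derivPairing (V1 V2 : RN N → ℝ) (l1 l2 μ1 μ2 β : ℝ) (u v φ ψ : RN N → ℝ) : ℝ :=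
  quadPairing V1 V2 l1 l2 u v φ ψ - quartPairing μ1 μ2 β u v φ ψ

/-- the Hardy-Littlewood-Sobolev best constant `S_HL` -/
def SHL (N : ℕ) : ℝ :=
  sInf {c | ∃ u : RN N → ℝ, MemD12 u ∧ ¬(u =ᵐ[volume] 0) ∧
    c = (∫ x, ‖gradient u x‖ ^ 2) /
        Real.sqrt (∫ x, ∫ y, u x ^ 2 * u y ^ 2 / ‖x - y‖ ^ 4)}

/-- the best Sobolev constant `S` of `D^{1,2} ↪ L^{2N/(N-2)}` -/
def sobolevS (N : ℕ) : ℝ :=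
  sInf {c | ∃ u : RN N → ℝ, MemD12 u ∧ ¬(u =ᵐ[volume] 0) ∧
    c = (∫ x, ‖gradient u x‖ ^ 2) /
        (∫ x, |u x| ^ (2 * (N : ℝ) / ((N : ℝ) - 2))) ^ (((N : ℝ) - 2) / N)}

/-- the `L^{N/2}` norm -/
def LN2 (N : ℕ) (V : RN N → ℝ) : ℝ :=
  (eLpNorm V (ENNReal.ofReal ((N : ℝ) / 2)) volume).toReal

/-- assumption (A1) -/
def A1 (V1 V2 : RN N → ℝ) : Prop :=
  (∀ x, 0 ≤ V1 x) ∧ (∀ x, 0 ≤ V2 x) ∧ ¬((fun x => V1 x + V2 x) =ᵐ[volume] 0)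

/-- assumption (A2) -/
def A2 (V : RN N → ℝ) : Prop :=
  MemLp V (ENNReal.ofReal ((N : ℝ) / 2)) volume ∧
    ∃ q : ℝ, (N : ℝ) / 2 < q ∧
      ∀ K : Set (RN N), IsCompact K → IntegrableOn (fun x => |V x| ^ q) K volume

/-- assumption (A3) -/
def A3 {N : ℕ} (μ1 μ2 β : ℝ) (V1 V2 : RN N → ℝ) : Prop :=
  (β - μ2) / (2 * β - μ1 - μ2) * LN2 N V1 + (β - μ1) / (2 * β - μ1 - μ2) * LN2 N V2
    < (min (Real.sqrt ((β ^ 2 - μ1 * μ2) / (μ1 * (2 * β - μ1 - μ2))))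
        (min (Real.sqrt ((β ^ 2 - μ1 * μ2) / (μ2 * (2 * β - μ1 - μ2))))
          (Real.sqrt 2)) - 1) * sobolevS N

/-- classical (pointwise) solution of system (S) -/
def SolvesS (V1 V2 : RN N → ℝ) (l1 l2 μ1 μ2 β : ℝ) (u v : RN N → ℝ) : Prop :=
  (∀ x, -lap u x + (V1 x + l1) * u x
      = μ1 * riesz4 (fun y => u y ^ 2) x * u x
        + β * riesz4 (fun y => v y ^ 2) x * u x) ∧
  (∀ x, -lap v x + (V2 x + l2) * v x
      = μ2 * riesz4 (fun y => v y ^ 2) x * v x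
        + β * riesz4 (fun y => u y ^ 2) x * v x)

/-- the fixed profile `ϑ`: smooth, supported in the unit ball, nonnegative,
radially symmetric and strictly radially decreasing -/
def ThetaGood {N : ℕ} (ϑ : RN N → ℝ) : Prop :=
  ContDiff ℝ (⊤ : ℕ∞) ϑ ∧ HasCompactSupport ϑ ∧ tsupport ϑ ⊆ Metric.ball 0 1 ∧
    (∀ x, 0 ≤ ϑ x) ∧
    ∃ g : ℝ → ℝ, (∀ x, ϑ x = g ‖x‖) ∧ StrictAntiOn g (Set.Icc (0 : ℝ) 1)

/-- `ϑ_{δ,y}(x) = δ^{-(N-2)/2} ϑ((x-y)/δ)` -/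
def thetaScaled {N : ℕ} (ϑ : RN N → ℝ) (δ : ℝ) (y : RN N) : RN N → ℝ :=
  fun x => δ ^ (-(((N : ℝ) - 2) / 2)) * ϑ (δ⁻¹ • (x - y))

namespace S13
variable {N : ℕ} {ϑ : RN N → ℝ} {δ : ℝ} {y : RN N}

lemma scalar_ineq {a m p : ℝ} (ha : 0 ≤ a) (hm : 0 < m) (hp : 1 ≤ p) :
    a ≤ m + m ^ (1 - p) * a ^ p := by
  rcases le_or_gt a m with h | h
  · have : (0:ℝ) ≤ m ^ (1 - p) * a ^ p :=
      mul_nonneg (Real.rpow_nonneg hm.le _) (Real.rpow_nonneg ha _)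
    linarith
  · have ha' : 0 < a := hm.trans h
    have h1 : a ^ p = a * a ^ (p - 1) := by
      nth_rewrite 2 [← Real.rpow_one a]
      rw [← Real.rpow_add ha']; ring_nf
    have h2 : m ^ (p - 1) ≤ a ^ (p - 1) := Real.rpow_le_rpow hm.le h.le (by linarith)
    have h4 : m ^ (1 - p) * m ^ (p - 1) = 1 := by
      rw [← Real.rpow_add hm]; norm_num
    have h5 : (0:ℝ) < m ^ (1 - p) := Real.rpow_pos_of_pos hm _
    have h6 : m ^ (1 - p) * a ^ p = a * (m ^ (1 - p) * a ^ (p - 1)) := by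
      rw [h1]; ring
    have h7 : m ^ (1 - p) * m ^ (p - 1) ≤ m ^ (1 - p) * a ^ (p - 1) :=
      mul_le_mul_of_nonneg_left h2 h5.le
    rw [h4] at h7
    nlinarith

lemma theta_nonneg (hδ : 0 < δ) (h0 : ∀ z, 0 ≤ ϑ z) (x : RN N) : 0 ≤ thetaScaled ϑ δ y x :=
  mul_nonneg (Real.rpow_nonneg hδ.le _) (h0 _)

lemma theta_zero (hδ : 0 < δ) (hs : ∀ z : RN N, (1:ℝ) ≤ ‖z‖ → ϑ z = 0)
    {x : RN N} (hx : δ ≤ ‖x - y‖) : thetaScaled ϑ δ y x = 0 := by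
  have : (1:ℝ) ≤ ‖δ⁻¹ • (x - y)‖ := by
    rw [norm_smul, Real.norm_eq_abs, abs_of_nonneg (inv_nonneg.2 hδ.le)]
    rw [← div_eq_inv_mul, le_div_iff₀ hδ]; linarith
  simp [thetaScaled, hs _ this]

lemma theta_cont (hc : Continuous ϑ) : Continuous (thetaScaled ϑ δ y) := by
  exact continuous_const.mul (hc.comp (by fun_prop : Continuous fun x : RN N => δ⁻¹ • (x - y)))

lemma theta_sq_compactSupport (hδ : 0 < δ) (hs : ∀ z : RN N, (1:ℝ) ≤ ‖z‖ → ϑ z = 0) :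
    HasCompactSupport (fun x => thetaScaled ϑ δ y x ^ 2) := by
  apply HasCompactSupport.intro (isCompact_closedBall y δ)
  intro x hx
  have : δ ≤ ‖x - y‖ := by
    simp only [closedBall, Set.mem_setOf_eq, not_le, dist_eq_norm] at hx
    exact hx.le
  rw [theta_zero hδ hs this]; ring

lemma theta_sq_integrable (hδ : 0 < δ) (hc : Continuous ϑ)
    (hs : ∀ z : RN N, (1:ℝ) ≤ ‖z‖ → ϑ z = 0) :
    Integrable (fun x => thetaScaled ϑ δ y x ^ 2) :=
  (((theta_cont hc).pow 2)).integrable_of_hasCompactSupport (theta_sq_compactSupport hδ hs)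

lemma theta_sq_le (hδ : 0 < δ) (h0 : ∀ z, 0 ≤ ϑ z) {T : ℝ} (hT : ∀ z, ϑ z ≤ T) (x : RN N) :
    thetaScaled ϑ δ y x ^ 2 ≤ δ ^ (-((N:ℝ) - 2)) * T ^ 2 := by
  have h1 : thetaScaled ϑ δ y x ^ 2
      = δ ^ (-(((N : ℝ) - 2) / 2)) * δ ^ (-(((N : ℝ) - 2) / 2)) * ϑ (δ⁻¹ • (x - y)) ^ 2 := by
    simp [thetaScaled]; ring
  rw [h1, ← Real.rpow_add hδ]
  have h2 : -(((N : ℝ) - 2) / 2) + -(((N : ℝ) - 2) / 2) = -((N:ℝ) - 2) := by ring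
  rw [h2]
  have h3 : ϑ (δ⁻¹ • (x - y)) ^ 2 ≤ T ^ 2 := by
    have := h0 (δ⁻¹ • (x - y)); have := hT (δ⁻¹ • (x - y)); nlinarith
  exact mul_le_mul_of_nonneg_left h3 (Real.rpow_nonneg hδ.le _)

lemma theta_sq_integral (hδ : 0 < δ) :
    ∫ x, thetaScaled ϑ δ y x ^ 2 = δ ^ 2 * ∫ z, ϑ z ^ 2 := by
  have h1 : ∀ x : RN N, thetaScaled ϑ δ y x ^ 2
      = δ ^ (-((N:ℝ) - 2)) * ϑ (δ⁻¹ • (x - y)) ^ 2 := by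
    intro x
    simp only [thetaScaled, mul_pow]
    rw [← Real.rpow_natCast (δ ^ (-(((N : ℝ) - 2) / 2))) 2, ← Real.rpow_mul hδ.le]
    norm_num
  simp_rw [h1]
  rw [integral_const_mul]
  have h2 : ∫ x : RN N, ϑ (δ⁻¹ • (x - y)) ^ 2
      = ∫ x : RN N, ϑ (δ⁻¹ • x) ^ 2 :=
    integral_sub_right_eq_self (fun x => ϑ (δ⁻¹ • x) ^ 2) y
  rw [h2]
  rw [MeasureTheory.Measure.integral_comp_inv_smul_of_nonneg volume (fun z => ϑ z ^ 2) hδ.le]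
  rw [finrank_euclideanSpace_fin, smul_eq_mul, ← mul_assoc]
  congr 1
  rw [← Real.rpow_natCast δ N, ← Real.rpow_add hδ, ← Real.rpow_natCast δ 2]
  norm_num

set_option maxHeartbeats 1000000 in
theorem nice (N : ℕ) (hN : 5 ≤ N) (V : RN N → ℝ) (hV0 : ∀ x, 0 ≤ V x)
    (hVmeas : Measurable V)
    (hVp : Integrable (fun x => V x ^ ((N:ℝ)/2)))
    (ϑ : RN N → ℝ) (hϑc : Continuous ϑ) (hϑK : HasCompactSupport ϑ)
    (hzs : ∀ z : RN N, (1:ℝ) ≤ ‖z‖ → ϑ z = 0) (hϑ0 : ∀ z, 0 ≤ ϑ z) :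
      ((∀ ε > (0 : ℝ), ∃ δ0 > (0 : ℝ), ∀ δ : ℝ, 0 < δ → δ < δ0 → ∀ y : RN N,
        (∫ x, V x * thetaScaled ϑ δ y x ^ 2) < ε) ∧
      (∀ ε > (0 : ℝ), ∃ Δ : ℝ, ∀ δ : ℝ, Δ < δ → ∀ y : RN N,
        (∫ x, V x * thetaScaled ϑ δ y x ^ 2) < ε) ∧
      (∀ ε > (0 : ℝ), ∃ R : ℝ, ∀ y : RN N, R ≤ ‖y‖ → ∀ δ > (0 : ℝ),
        (∫ x, V x * thetaScaled ϑ δ y x ^ 2) < ε)) := by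
  obtain ⟨T, hTn⟩ := hϑc.bounded_above_of_compact_support hϑK
  have hT : ∀ z, ϑ z ≤ T := fun z => (le_abs_self _).trans ((Real.norm_eq_abs _ ▸ hTn z))
  set p : ℝ := (N:ℝ)/2 with hpdef
  have hN5 : (5:ℝ) ≤ (N:ℝ) := by exact_mod_cast hN
  have hp1 : (1:ℝ) ≤ p := by rw [hpdef]; linarith
  set Cθ : ℝ := ∫ z, ϑ z ^ 2 with hCθdef
  have hCθ0 : 0 ≤ Cθ := integral_nonneg (fun z => sq_nonneg _)
  set W : ℕ → RN N → ℝ := fun n x => if ‖x‖ ≤ (n:ℝ) then min (V x) (n:ℝ) else 0 with hWdef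
  set r : ℕ → RN N → ℝ := fun n x => V x - W n x with hrdef
  have hW0 : ∀ n x, 0 ≤ W n x := by
    intro n x; rw [hWdef]; dsimp only
    split
    · exact le_min (hV0 x) (Nat.cast_nonneg n)
    · exact le_refl 0
  have hWV : ∀ n x, W n x ≤ V x := by
    intro n x; rw [hWdef]; dsimp only
    split
    · exact min_le_left _ _
    · exact hV0 x
  have hWn : ∀ n x, W n x ≤ (n:ℝ) := by
    intro n x; rw [hWdef]; dsimp only
    split
    · exact min_le_right _ _
    · exact Nat.cast_nonneg n
  have hr0 : ∀ n x, 0 ≤ r n x := fun n x => by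
    rw [hrdef]; dsimp only; linarith [hWV n x]
  have hrV : ∀ n x, r n x ≤ V x := fun n x => by
    rw [hrdef]; dsimp only; linarith [hW0 n x]
  have hWmeas : ∀ n, Measurable (W n) := by
    intro n
    exact Measurable.ite ((isClosed_le continuous_norm continuous_const).measurableSet)
      (hVmeas.min measurable_const) measurable_const
  have hrmeas : ∀ n, Measurable (r n) := fun n => hVmeas.sub (hWmeas n)
  have hrpmeas : ∀ n, Measurable (fun x => r n x ^ p) := fun n =>
    (Real.continuous_rpow_const (by linarith)).measurable.comp (hrmeas n)
  have hrpint : ∀ n, Integrable (fun x => r n x ^ p) := by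
    intro n
    refine hVp.mono (hrpmeas n).aestronglyMeasurable (ae_of_all _ fun x => ?_)
    rw [Real.norm_of_nonneg (Real.rpow_nonneg (hr0 n x) _),
      Real.norm_of_nonneg (Real.rpow_nonneg (hV0 x) _)]
    exact Real.rpow_le_rpow (hr0 n x) (hrV n x) (by linarith)
  set t : ℕ → ℝ := fun n => ∫ x, r n x ^ p with htdef
  have ht0 : ∀ n, 0 ≤ t n := fun n =>
    integral_nonneg fun x => Real.rpow_nonneg (hr0 n x) _
  have htend : Tendsto t atTop (𝓝 0) := by
    have h0' : (0:ℝ) = ∫ x : RN N, (0:ℝ) := by simp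
    rw [htdef, h0']
    apply tendsto_integral_of_dominated_convergence (fun x => V x ^ p)
      (fun n => (hrpmeas n).aestronglyMeasurable) hVp
    · intro n
      refine ae_of_all _ fun x => ?_
      rw [Real.norm_of_nonneg (Real.rpow_nonneg (hr0 n x) _)]
      exact Real.rpow_le_rpow (hr0 n x) (hrV n x) (by linarith)
    · refine ae_of_all _ fun x => ?_
      have : ∀ᶠ n : ℕ in atTop, r n x ^ p = 0 := by
        rw [eventually_atTop]
        refine ⟨max ⌈‖x‖⌉₊ ⌈V x⌉₊, fun n hn => ?_⟩
        have hx1 : ‖x‖ ≤ (n:ℝ) :=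
          (Nat.le_ceil _).trans (Nat.cast_le.2 ((le_max_left _ _).trans hn))
        have hx2 : V x ≤ (n:ℝ) :=
          (Nat.le_ceil _).trans (Nat.cast_le.2 ((le_max_right _ _).trans hn))
        have : r n x = 0 := by
          rw [hrdef]; dsimp only; rw [hWdef]; dsimp only
          rw [if_pos hx1, min_eq_left hx2]; ring
        rw [this, Real.zero_rpow (by positivity)]
      exact Tendsto.congr' (this.mono fun n hn => hn.symm) tendsto_const_nhds
  have hWθint : ∀ n : ℕ, ∀ δ : ℝ, 0 < δ → ∀ y : RN N,
      Integrable (fun x => W n x * thetaScaled ϑ δ y x ^ 2) := by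
    intro n δ hδ y
    refine (theta_sq_integrable hδ hϑc hzs).bdd_mul (hWmeas n).aestronglyMeasurable
      (c := (n:ℝ)) (ae_of_all _ fun x => ?_)
    rw [Real.norm_of_nonneg (hW0 n x)]; exact hWn n x
  have key : ∀ n : ℕ, ∀ δ : ℝ, 0 < δ → ∀ s : ℝ, 0 < s → ∀ y : RN N,
      (∫ x, V x * thetaScaled ϑ δ y x ^ 2)
        ≤ (∫ x, W n x * thetaScaled ϑ δ y x ^ 2) + s * Cθ + s ^ (1 - p) * T ^ 2 * t n := by
    intro n δ hδ s hs' y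
    have hθ0 : ∀ x, 0 ≤ thetaScaled ϑ δ y x := theta_nonneg hδ hϑ0
    have hθint : Integrable (fun x => thetaScaled ϑ δ y x ^ 2) :=
      theta_sq_integrable hδ hϑc hzs
    set m : ℝ := s * δ ^ (-2:ℝ) with hmdef
    have hm0 : 0 < m := mul_pos hs' (Real.rpow_pos_of_pos hδ _)
    have hpt : ∀ x, V x * thetaScaled ϑ δ y x ^ 2
        ≤ W n x * thetaScaled ϑ δ y x ^ 2 + m * thetaScaled ϑ δ y x ^ 2
          + (m ^ (1-p) * (δ ^ (-((N:ℝ)-2)) * T ^ 2)) * r n x ^ p := by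
      intro x
      have h1 : V x * thetaScaled ϑ δ y x ^ 2
          = W n x * thetaScaled ϑ δ y x ^ 2 + r n x * thetaScaled ϑ δ y x ^ 2 := by
        rw [hrdef]; ring
      have h2 : r n x ≤ m + m ^ (1-p) * r n x ^ p := scalar_ineq (hr0 n x) hm0 hp1
      have h3 : r n x * thetaScaled ϑ δ y x ^ 2
          ≤ (m + m ^ (1-p) * r n x ^ p) * thetaScaled ϑ δ y x ^ 2 :=
        mul_le_mul_of_nonneg_right h2 (sq_nonneg _)
      have h4 : (m ^ (1-p) * r n x ^ p) * thetaScaled ϑ δ y x ^ 2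
          ≤ (m ^ (1-p) * r n x ^ p) * (δ ^ (-((N:ℝ)-2)) * T ^ 2) :=
        mul_le_mul_of_nonneg_left (theta_sq_le hδ hϑ0 hT x)
          (mul_nonneg (Real.rpow_nonneg hm0.le _) (Real.rpow_nonneg (hr0 n x) _))
      nlinarith [sq_nonneg (thetaScaled ϑ δ y x)]
    have hRHSint : Integrable (fun x => W n x * thetaScaled ϑ δ y x ^ 2
        + m * thetaScaled ϑ δ y x ^ 2
        + (m ^ (1-p) * (δ ^ (-((N:ℝ)-2)) * T ^ 2)) * r n x ^ p) :=
      ((hWθint n δ hδ y).add (hθint.const_mul m)).add ((hrpint n).const_mul _)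
    have e0 : δ ^ (-2:ℝ) * δ ^ 2 = 1 := by
      rw [← Real.rpow_natCast δ 2, ← Real.rpow_add hδ]; norm_num
    have e1 : m * (δ ^ 2 * Cθ) = s * Cθ := by
      rw [hmdef]
      calc s * δ ^ (-2:ℝ) * (δ ^ 2 * Cθ) = s * (δ ^ (-2:ℝ) * δ ^ 2) * Cθ := by ring
        _ = s * Cθ := by rw [e0]; ring
    have e2 : m ^ (1-p) * (δ ^ (-((N:ℝ)-2)) * T ^ 2) = s ^ (1-p) * T ^ 2 := by
      rw [hmdef, Real.mul_rpow hs'.le (Real.rpow_nonneg hδ.le _),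
        ← Real.rpow_mul hδ.le]
      have e3 : δ ^ ((-2:ℝ) * (1-p)) * δ ^ (-((N:ℝ)-2)) = 1 := by
        rw [← Real.rpow_add hδ]
        have : (-2:ℝ) * (1-p) + -((N:ℝ)-2) = 0 := by rw [hpdef]; ring
        rw [this, Real.rpow_zero]
      calc s ^ (1-p) * δ ^ ((-2:ℝ)*(1-p)) * (δ ^ (-((N:ℝ)-2)) * T ^ 2)
          = s ^ (1-p) * (δ ^ ((-2:ℝ)*(1-p)) * δ ^ (-((N:ℝ)-2))) * T ^ 2 := by ring
        _ = s ^ (1-p) * T ^ 2 := by rw [e3]; ring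
    by_cases hI : Integrable (fun x => V x * thetaScaled ϑ δ y x ^ 2)
    · have hmono := integral_mono hI hRHSint hpt
      have hA : Integrable (fun x => W n x * thetaScaled ϑ δ y x ^ 2) := hWθint n δ hδ y
      have hB : Integrable (fun x => m * thetaScaled ϑ δ y x ^ 2) := hθint.const_mul m
      have hC : Integrable (fun x =>
          (m ^ (1-p) * (δ ^ (-((N:ℝ)-2)) * T ^ 2)) * r n x ^ p) := (hrpint n).const_mul _
      have hAB : Integrable (fun x => W n x * thetaScaled ϑ δ y x ^ 2
          + m * thetaScaled ϑ δ y x ^ 2) := hA.add hB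
      rw [integral_add hAB hC, integral_add hA hB,
        integral_const_mul, integral_const_mul, theta_sq_integral hδ] at hmono
      rw [e1, e2] at hmono
      simp only [htdef]
      linarith
    · rw [integral_undef hI]
      have hw : 0 ≤ ∫ x, W n x * thetaScaled ϑ δ y x ^ 2 :=
        integral_nonneg fun x => mul_nonneg (hW0 n x) (sq_nonneg _)
      have h5 : 0 ≤ s ^ (1-p) * T ^ 2 * t n :=
        mul_nonneg (mul_nonneg (Real.rpow_nonneg hs'.le _) (sq_nonneg _)) (ht0 n)
      nlinarith [mul_nonneg hs'.le hCθ0]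
  have hWa : ∀ n : ℕ, ∀ δ : ℝ, 0 < δ → ∀ y : RN N,
      (∫ x, W n x * thetaScaled ϑ δ y x ^ 2) ≤ (n:ℝ) * (δ ^ 2 * Cθ) := by
    intro n δ hδ y
    have hθint : Integrable (fun x => thetaScaled ϑ δ y x ^ 2) :=
      theta_sq_integrable hδ hϑc hzs
    have h := integral_mono (hWθint n δ hδ y) (hθint.const_mul (n:ℝ))
      (fun x => mul_le_mul_of_nonneg_right (hWn n x) (sq_nonneg _))
    rwa [integral_const_mul, theta_sq_integral hδ] at h
  set voln : ℕ → ℝ := fun n => (volume (closedBall (0 : RN N) (n:ℝ))).toReal with hvolndef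
  have hvoln0 : ∀ n, 0 ≤ voln n := fun n => ENNReal.toReal_nonneg
  have hWb : ∀ n : ℕ, ∀ δ : ℝ, 0 < δ → ∀ y : RN N,
      (∫ x, W n x * thetaScaled ϑ δ y x ^ 2)
        ≤ (n:ℝ) * (δ ^ (-((N:ℝ)-2)) * T ^ 2) * voln n := by
    intro n δ hδ y
    have hind : Integrable ((closedBall (0 : RN N) (n:ℝ)).indicator
        (fun _ => (n:ℝ) * (δ ^ (-((N:ℝ)-2)) * T ^ 2))) := by
      rw [integrable_indicator_iff measurableSet_closedBall]
      exact integrableOn_const measure_closedBall_lt_top.ne enorm_ne_top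
    have hpt : ∀ x, W n x * thetaScaled ϑ δ y x ^ 2
        ≤ (closedBall (0 : RN N) (n:ℝ)).indicator
            (fun _ => (n:ℝ) * (δ ^ (-((N:ℝ)-2)) * T ^ 2)) x := by
      intro x
      by_cases hx : ‖x‖ ≤ (n:ℝ)
      · have hmem : x ∈ closedBall (0 : RN N) (n:ℝ) := by
          rw [mem_closedBall, dist_zero_right]; exact hx
        rw [Set.indicator_of_mem hmem]
        exact mul_le_mul (hWn n x) (theta_sq_le hδ hϑ0 hT x) (sq_nonneg _)
          (Nat.cast_nonneg n)
      · have hnm : x ∉ closedBall (0 : RN N) (n:ℝ) := by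
          rw [mem_closedBall, dist_zero_right]; exact hx
        rw [Set.indicator_of_notMem hnm]
        have : W n x = 0 := by rw [hWdef]; dsimp only; rw [if_neg hx]
        rw [this]; simp
    have h := integral_mono (hWθint n δ hδ y) hind hpt
    rw [integral_indicator_const _ measurableSet_closedBall] at h
    rw [smul_eq_mul] at h
    calc (∫ x, W n x * thetaScaled ϑ δ y x ^ 2)
        ≤ (volume (closedBall (0:RN N) (n:ℝ))).toReal
            * ((n:ℝ) * (δ ^ (-((N:ℝ)-2)) * T ^ 2)) := h
      _ = (n:ℝ) * (δ ^ (-((N:ℝ)-2)) * T ^ 2) * voln n := by rw [hvolndef]; ring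
  have hWc : ∀ n : ℕ, ∀ δ : ℝ, 0 < δ → ∀ y : RN N, (n:ℝ) + δ ≤ ‖y‖ →
      (∫ x, W n x * thetaScaled ϑ δ y x ^ 2) = 0 := by
    intro n δ hδ y hy
    have hzero : ∀ x, W n x * thetaScaled ϑ δ y x ^ 2 = 0 := by
      intro x
      by_cases hx : ‖x‖ ≤ (n:ℝ)
      · have h1 : δ ≤ ‖x - y‖ := by
          have h2 : ‖y‖ - ‖x‖ ≤ ‖x - y‖ := by
            rw [norm_sub_rev]; exact norm_sub_norm_le y x
          linarith
        rw [theta_zero hδ hzs h1]; ring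
      · have : W n x = 0 := by rw [hWdef]; dsimp only; rw [if_neg hx]
        rw [this]; ring
    calc (∫ x, W n x * thetaScaled ϑ δ y x ^ 2) = ∫ _x : RN N, (0:ℝ) := by
          congr 1; funext x; exact hzero x
      _ = 0 := integral_zero _ _
  have common : ∀ ε : ℝ, 0 < ε → ∃ s : ℝ, 0 < s ∧ ∃ n : ℕ,
      s * Cθ < ε/3 ∧ s ^ (1-p) * T ^ 2 * t n < ε/3 := by
    intro ε hε
    set s := ε / (3*(Cθ+1)) with hsdef
    have hs' : 0 < s := by positivity
    have hsC : s * Cθ < ε/3 := by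
      have h8 : s * (3*(Cθ+1)) = ε := div_mul_cancel₀ _ (by positivity)
      nlinarith
    have hev : ∀ᶠ n in atTop, t n < (ε/3) / (s ^ (1-p) * T ^ 2 + 1) :=
      htend.eventually (gt_mem_nhds (by positivity))
    obtain ⟨n, hn⟩ := hev.exists
    refine ⟨s, hs', n, hsC, ?_⟩
    have hcoef : (0:ℝ) < s ^ (1-p) * T ^ 2 + 1 := by positivity
    have h7 : t n * (s ^ (1-p) * T ^ 2 + 1) < ε/3 := (lt_div_iff₀ hcoef).1 hn
    nlinarith [ht0 n]
  refine ⟨?_, ?_, ?_⟩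
  · -- (a) δ → 0
    intro ε hε
    obtain ⟨s, hs', n, hsC, htail⟩ := common ε hε
    refine ⟨min 1 (ε/(3*((n:ℝ)+1)*(Cθ+1))), by positivity, fun δ hδ hδ0 y => ?_⟩
    have h1 := key n δ hδ s hs' y
    have h2 := hWa n δ hδ y
    have hδ1 : δ < 1 := lt_of_lt_of_le hδ0 (min_le_left _ _)
    have hδ2 : δ < ε/(3*((n:ℝ)+1)*(Cθ+1)) := lt_of_lt_of_le hδ0 (min_le_right _ _)
    have hE : δ * (3*((n:ℝ)+1)*(Cθ+1)) < ε := by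
      rw [lt_div_iff₀ (by positivity)] at hδ2; linarith
    have h3 : (n:ℝ) * (δ ^ 2 * Cθ) < ε/3 := by
      nlinarith [Nat.cast_nonneg (α := ℝ) n, hCθ0, mul_pos hδ hδ, sq_nonneg δ]
    linarith
  · -- (b) δ → ∞
    intro ε hε
    obtain ⟨s, hs', n, hsC, htail⟩ := common ε hε
    have hK0 : (0:ℝ) < ((n:ℝ)+1)*(T ^ 2+1)*(voln n + 1) := by positivity
    set K := ((n:ℝ)+1)*(T ^ 2+1)*(voln n + 1) with hKdef
    refine ⟨max 1 (3*K/ε), fun δ hδΔ y => ?_⟩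
    have hδ1 : (1:ℝ) ≤ δ := le_of_lt (lt_of_le_of_lt (le_max_left _ _) hδΔ)
    have hδ : (0:ℝ) < δ := by linarith
    have hδK : 3*K/ε < δ := lt_of_le_of_lt (le_max_right _ _) hδΔ
    have hKδ : 3*K < ε*δ := by rw [div_lt_iff₀ hε] at hδK; linarith
    have hx1 : δ ^ (-((N:ℝ)-2)) ≤ δ⁻¹ := by
      have h9 := Real.rpow_le_rpow_of_exponent_le hδ1
        (show -((N:ℝ)-2) ≤ (-1:ℝ) by linarith)
      rwa [Real.rpow_neg_one] at h9
    have hx0 : (0:ℝ) ≤ δ ^ (-((N:ℝ)-2)) := Real.rpow_nonneg (by linarith) _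
    have hb : (n:ℝ)*T ^ 2*voln n ≤ ((n:ℝ)+1)*(T ^ 2+1)*(voln n+1) := by
      nlinarith [hvoln0 n, sq_nonneg T, Nat.cast_nonneg (α := ℝ) n,
        mul_nonneg (Nat.cast_nonneg (α := ℝ) n) (sq_nonneg T),
        mul_nonneg (Nat.cast_nonneg (α := ℝ) n) (hvoln0 n),
        mul_nonneg (sq_nonneg T) (hvoln0 n)]
    have h5 : (n:ℝ) * (δ ^ (-((N:ℝ)-2)) * T ^ 2) * voln n ≤ K * δ⁻¹ := by
      calc (n:ℝ) * (δ ^ (-((N:ℝ)-2)) * T ^ 2) * voln n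
          = ((n:ℝ)*T ^ 2*voln n) * δ ^ (-((N:ℝ)-2)) := by ring
        _ ≤ K * δ ^ (-((N:ℝ)-2)) := by
            rw [hKdef]; exact mul_le_mul_of_nonneg_right hb hx0
        _ ≤ K * δ⁻¹ := mul_le_mul_of_nonneg_left hx1 hK0.le
    have h6 : K * δ⁻¹ < ε/3 := by
      have h10 : K < ε*δ/3 := by linarith
      have h11 := mul_lt_mul_of_pos_right h10 (inv_pos.2 hδ)
      have h12 : ε*δ/3 * δ⁻¹ = ε/3 := by field_simp
      rwa [h12] at h11
    have h1 := key n δ hδ s hs' y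
    have h2 := hWb n δ hδ y
    linarith
  · -- (c) |y| → ∞
    intro ε hε
    obtain ⟨s, hs', n, hsC, htail⟩ := common ε hε
    have hK0 : (0:ℝ) < ((n:ℝ)+1)*(T ^ 2+1)*(voln n + 1) := by positivity
    set K := ((n:ℝ)+1)*(T ^ 2+1)*(voln n + 1) with hKdef
    refine ⟨(n:ℝ) + max 1 (3*K/ε), fun y hy δ hδ => ?_⟩
    have h1 := key n δ hδ s hs' y
    rcases le_or_gt δ (max 1 (3*K/ε)) with hcase | hcase
    · have h2 := hWc n δ hδ y (by linarith)
      rw [h2] at h1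
      linarith
    · have hδ1 : (1:ℝ) ≤ δ := le_of_lt (lt_of_le_of_lt (le_max_left _ _) hcase)
      have hδK : 3*K/ε < δ := lt_of_le_of_lt (le_max_right _ _) hcase
      have hKδ : 3*K < ε*δ := by rw [div_lt_iff₀ hε] at hδK; linarith
      have hx1 : δ ^ (-((N:ℝ)-2)) ≤ δ⁻¹ := by
        have h9 := Real.rpow_le_rpow_of_exponent_le hδ1
          (show -((N:ℝ)-2) ≤ (-1:ℝ) by linarith)
        rwa [Real.rpow_neg_one] at h9
      have hx0 : (0:ℝ) ≤ δ ^ (-((N:ℝ)-2)) := Real.rpow_nonneg (by linarith) _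
      have hb : (n:ℝ)*T ^ 2*voln n ≤ ((n:ℝ)+1)*(T ^ 2+1)*(voln n+1) := by
        nlinarith [hvoln0 n, sq_nonneg T, Nat.cast_nonneg (α := ℝ) n,
          mul_nonneg (Nat.cast_nonneg (α := ℝ) n) (sq_nonneg T),
          mul_nonneg (Nat.cast_nonneg (α := ℝ) n) (hvoln0 n),
          mul_nonneg (sq_nonneg T) (hvoln0 n)]
      have h5 : (n:ℝ) * (δ ^ (-((N:ℝ)-2)) * T ^ 2) * voln n ≤ K * δ⁻¹ := by
        calc (n:ℝ) * (δ ^ (-((N:ℝ)-2)) * T ^ 2) * voln n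
            = ((n:ℝ)*T ^ 2*voln n) * δ ^ (-((N:ℝ)-2)) := by ring
          _ ≤ K * δ ^ (-((N:ℝ)-2)) := by
              rw [hKdef]; exact mul_le_mul_of_nonneg_right hb hx0
          _ ≤ K * δ⁻¹ := mul_le_mul_of_nonneg_left hx1 hK0.le
      have h6 : K * δ⁻¹ < ε/3 := by
        have h10 : K < ε*δ/3 := by linarith
        have h11 := mul_lt_mul_of_pos_right h10 (inv_pos.2 hδ)
        have h12 : ε*δ/3 * δ⁻¹ = ε/3 := by field_simp
        rwa [h12] at h11
      have h2 := hWb n δ hδ y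
      linarith

end S13

/-- Lemma 4.4: uniform smallness of `∫ V_j ϑ_{δ,y}²` as `δ → 0`, `δ → ∞`,
or `|y| → ∞`. -/
theorem statement13 (N : ℕ) (hN : 5 ≤ N)
    (V1 V2 : RN N → ℝ) (hA1 : A1 V1 V2) (hA2₁ : A2 V1) (hA2₂ : A2 V2)
    (ϑ : RN N → ℝ) (hϑ : ThetaGood ϑ) :
    ∀ V : RN N → ℝ, (V = V1 ∨ V = V2) →
      (∀ ε > (0 : ℝ), ∃ δ0 > (0 : ℝ), ∀ δ : ℝ, 0 < δ → δ < δ0 → ∀ y : RN N,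
        (∫ x, V x * thetaScaled ϑ δ y x ^ 2) < ε) ∧
      (∀ ε > (0 : ℝ), ∃ Δ : ℝ, ∀ δ : ℝ, Δ < δ → ∀ y : RN N,
        (∫ x, V x * thetaScaled ϑ δ y x ^ 2) < ε) ∧
      (∀ ε > (0 : ℝ), ∃ R : ℝ, ∀ y : RN N, R ≤ ‖y‖ → ∀ δ > (0 : ℝ),
        (∫ x, V x * thetaScaled ϑ δ y x ^ 2) < ε) := by
  intro V hVor
  have hV0 : ∀ x, 0 ≤ V x := by
    rcases hVor with rfl | rfl
    · exact hA1.1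
    · exact hA1.2.1
  have hVLp : MemLp V (ENNReal.ofReal ((N:ℝ)/2)) volume := by
    rcases hVor with rfl | rfl
    · exact hA2₁.1
    · exact hA2₂.1
  obtain ⟨hcd, hK, hsupp, hpos, -⟩ := hϑ
  have hϑc : Continuous ϑ := hcd.continuous
  have hzs : ∀ z : RN N, (1:ℝ) ≤ ‖z‖ → ϑ z = 0 := by
    intro z hz
    apply image_eq_zero_of_notMem_tsupport
    intro hmem
    have h2 := hsupp hmem
    rw [Metric.mem_ball, dist_zero_right] at h2
    linarith
  have hVae := hVLp.aestronglyMeasurable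
  set V' : RN N → ℝ := fun x => max (hVae.mk V x) 0 with hV'def
  have hmeas' : Measurable V' :=
    hVae.stronglyMeasurable_mk.measurable.max measurable_const
  have hae : V =ᵐ[volume] V' := by
    filter_upwards [hVae.ae_eq_mk] with x hx
    rw [hV'def]; dsimp only; rw [← hx, max_eq_left (hV0 x)]
  have hV'0 : ∀ x, 0 ≤ V' x := fun x => le_max_right _ _
  have hV'Lp : MemLp V' (ENNReal.ofReal ((N:ℝ)/2)) volume := hVLp.ae_eq hae
  have hN0 : (0:ℝ) < (N:ℝ)/2 := by
    have h3 : (5:ℝ) ≤ (N:ℝ) := by exact_mod_cast hN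
    linarith
  have hV'p : Integrable (fun x => V' x ^ ((N:ℝ)/2)) := by
    have h := hV'Lp.integrable_norm_rpow
      (by simpa [ENNReal.ofReal_eq_zero, not_le] using hN0) ENNReal.ofReal_ne_top
    rw [ENNReal.toReal_ofReal hN0.le] at h
    refine h.congr (ae_of_all _ fun x => ?_)
    simp only []
    rw [Real.norm_of_nonneg (hV'0 x)]
  obtain ⟨Ha, Hb, Hc⟩ := S13.nice N hN V' hV'0 hmeas' hV'p ϑ hϑc hK hzs hpos
  have heq : ∀ (δ : ℝ) (y : RN N),
      (∫ x, V x * thetaScaled ϑ δ y x ^ 2) = ∫ x, V' x * thetaScaled ϑ δ y x ^ 2 :=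
    fun δ y => integral_congr_ae (hae.mono fun x hx => by simp only []; rw [hx])
  refine ⟨fun ε hε => ?_, fun ε hε => ?_, fun ε hε => ?_⟩
  · obtain ⟨δ0, hδ0, h⟩ := Ha ε hε
    exact ⟨δ0, hδ0, fun δ h1 h2 y => by rw [heq δ y]; exact h δ h1 h2 y⟩
  · obtain ⟨Δ, h⟩ := Hb ε hε
    exact ⟨Δ, fun δ h1 y => by rw [heq δ y]; exact h δ h1 y⟩
  · obtain ⟨R, h⟩ := Hc ε hε
    exact ⟨R, fun y hy δ hδ => by rw [heq δ y]; exact h y hy δ hδ⟩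
end
end

section
/- Assume N ≥ 5, μ1, μ2 > 0 and β > max{μ1, μ2}, and fix r > 0. Then: (a) lim_{δ→0⁺} sup{γ(√k1·ϑ_{δ,y}, √k2·ϑ_{δ,y}) : y ∈ ℝ^N} = 0; (b) lim_{δ→∞} γ(√k1·ϑ_{δ,y}, √k2·ϑ_{δ,y}) = 1 uniformly for |y| ≤ r; (c) ⟨ξ(√k1·ϑ_{δ,y}, √k2·ϑ_{δ,y}), y⟩_{ℝ^N} > 0 for every y ∈ ℝ^N \ {0} and every δ > 0. -/
open MeasureTheory Metric Filter Topology RealInnerProductSpace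

noncomputable section

variable {N : ℕ}

/-- the critical exponent `2* = 2N/(N-2)` -/
def tstar (N : ℕ) : ℝ := 2 * (N : ℝ) / ((N : ℝ) - 2)

/-- the density `ρ = μ₁(u⁺)^{2*} + 2β(u⁺)^{2*/2}(v⁺)^{2*/2} + μ₂(v⁺)^{2*}` -/
def rhoF {N : ℕ} (μ1 μ2 β : ℝ) (u v : RN N → ℝ) (x : RN N) : ℝ :=
  μ1 * posp u x ^ tstar N
    + 2 * β * (posp u x ^ (tstar N / 2) * posp v x ^ (tstar N / 2))
    + μ2 * posp v x ^ tstar N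

/-- the barycenter map `ξ` -/
def bary {N : ℕ} (μ1 μ2 β : ℝ) (u v : RN N → ℝ) : RN N :=
  (∫ x, rhoF μ1 μ2 β u v x)⁻¹ •
    ∫ x, rhoF μ1 μ2 β u v x • ((1 + ‖x‖)⁻¹ • x)

/-- the concentration map `γ` -/
def conc {N : ℕ} (μ1 μ2 β : ℝ) (u v : RN N → ℝ) : ℝ :=
  (∫ x, ‖(1 + ‖x‖)⁻¹ • x - bary μ1 μ2 β u v‖ * rhoF μ1 μ2 β u v x)
    / ∫ x, rhoF μ1 μ2 β u v x

/-- `c_∞ := inf_{𝒩_∞} I_∞` -/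
def cInfty {N : ℕ} (μ1 μ2 β : ℝ) : ℝ :=
  sInf {c | ∃ u v : RN N → ℝ,
    NehariMem (fun _ : RN N => (0 : ℝ)) (fun _ : RN N => (0 : ℝ)) 0 0 μ1 μ2 β u v ∧
    c = energy (fun _ : RN N => (0 : ℝ)) (fun _ : RN N => (0 : ℝ)) 0 0 μ1 μ2 β u v}

-- ===================== auxiliary lemmas =====================

section Aux

lemma tstar_pos (hN : 5 ≤ N) : 0 < tstar N := by
  have h5 : (5:ℝ) ≤ (N:ℝ) := by exact_mod_cast hN
  rw [tstar]
  apply div_pos (by linarith) (by linarith)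

lemma theta_outside (ϑ : RN N → ℝ) (hϑ : ThetaGood ϑ) (z : RN N) (hz : 1 ≤ ‖z‖) :
    ϑ z = 0 := by
  apply image_eq_zero_of_notMem_tsupport
  intro hmem
  have := hϑ.2.2.1 hmem
  rw [mem_ball, dist_zero_right] at this
  linarith

lemma theta_even (ϑ : RN N → ℝ) (hϑ : ThetaGood ϑ) (z : RN N) : ϑ (-z) = ϑ z := by
  obtain ⟨g, hg, -⟩ := hϑ.2.2.2.2
  rw [hg, hg, norm_neg]

lemma theta_bound (ϑ : RN N → ℝ) (hϑ : ThetaGood ϑ) (z : RN N) : ϑ z ≤ ϑ 0 := by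
  obtain ⟨g, hg, hanti⟩ := hϑ.2.2.2.2
  rcases le_or_gt ‖z‖ 1 with h1 | h1
  · rcases eq_or_lt_of_le (norm_nonneg z) with h0 | h0
    · have : z = 0 := by rwa [eq_comm, norm_eq_zero] at h0
      rw [this]
    · have := hanti (Set.mem_Icc.2 ⟨le_refl 0, zero_le_one⟩)
        (Set.mem_Icc.2 ⟨norm_nonneg z, h1⟩) h0
      rw [hg z, hg 0, norm_zero]
      exact this.le
  · rw [theta_outside ϑ hϑ z h1.le]
    exact hϑ.2.2.2.1 0

lemma theta_zero_pos (hN : 5 ≤ N) (ϑ : RN N → ℝ) (hϑ : ThetaGood ϑ) : 0 < ϑ 0 := by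
  obtain ⟨g, hg, hanti⟩ := hϑ.2.2.2.2
  have hN0 : 0 < N := by omega
  set e : RN N := EuclideanSpace.single (⟨0, hN0⟩ : Fin N) (1:ℝ) with he
  have hne : ‖e‖ = 1 := by rw [he, EuclideanSpace.norm_single]; norm_num
  have hϑe : ϑ e = 0 := theta_outside ϑ hϑ e (by rw [hne])
  have hg1 : g 1 = 0 := by rw [← hne, ← hg, hϑe]
  have := hanti (Set.mem_Icc.2 ⟨le_refl 0, zero_le_one⟩)
    (Set.mem_Icc.2 ⟨zero_le_one, le_refl 1⟩) zero_lt_one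
  rw [hg 0, norm_zero]
  rw [hg1] at this
  exact this

lemma norm_T (x : RN N) : ‖(1 + ‖x‖)⁻¹ • x‖ = ‖x‖ / (1 + ‖x‖) := by
  have h : (0:ℝ) < 1 + ‖x‖ := by positivity
  rw [norm_smul, Real.norm_eq_abs, abs_of_pos (inv_pos.2 h), inv_mul_eq_div]

lemma norm_T_le_one (x : RN N) : ‖(1 + ‖x‖)⁻¹ • x‖ ≤ 1 := by
  have h : (0:ℝ) < 1 + ‖x‖ := by positivity
  rw [norm_T, div_le_one h]; linarith

lemma one_sub_norm_T (x : RN N) : |‖(1 + ‖x‖)⁻¹ • x‖ - 1| = (1 + ‖x‖)⁻¹ := by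
  have h : (0:ℝ) < 1 + ‖x‖ := by positivity
  rw [norm_T, abs_of_nonpos (by rw [sub_nonpos, div_le_one h]; linarith)]
  field_simp
  ring

lemma T_lip (a b : RN N) :
    ‖(1 + ‖a‖)⁻¹ • a - (1 + ‖b‖)⁻¹ • b‖ ≤ 2 * ‖a - b‖ := by
  have ha : (0:ℝ) < 1 + ‖a‖ := by positivity
  have hb : (0:ℝ) < 1 + ‖b‖ := by positivity
  have key : (1 + ‖a‖)⁻¹ • a - (1 + ‖b‖)⁻¹ • b
      = (1 + ‖a‖)⁻¹ • (a - b) + ((1 + ‖a‖)⁻¹ - (1 + ‖b‖)⁻¹) • b := by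
    rw [smul_sub, sub_smul]; abel
  rw [key]
  refine le_trans (norm_add_le _ _) ?_
  rw [norm_smul, norm_smul, Real.norm_eq_abs, Real.norm_eq_abs]
  have h1 : |(1 + ‖a‖)⁻¹| * ‖a - b‖ ≤ 1 * ‖a - b‖ := by
    apply mul_le_mul_of_nonneg_right _ (norm_nonneg _)
    rw [abs_of_pos (inv_pos.2 ha)]
    exact inv_le_one_of_one_le₀ (by linarith [norm_nonneg a])
  have h2 : |(1 + ‖a‖)⁻¹ - (1 + ‖b‖)⁻¹| * ‖b‖ ≤ 1 * ‖a - b‖ := by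
    have e : (1 + ‖a‖)⁻¹ - (1 + ‖b‖)⁻¹ = (‖b‖ - ‖a‖) * ((1 + ‖a‖)⁻¹ * (1 + ‖b‖)⁻¹) := by
      field_simp
      ring
    rw [e, abs_mul, abs_of_pos (show (0:ℝ) < (1+‖a‖)⁻¹*(1+‖b‖)⁻¹ by positivity)]
    have h3 : |‖b‖ - ‖a‖| ≤ ‖a - b‖ := by
      rw [abs_sub_comm]; exact abs_norm_sub_norm_le a b
    have h4 : (1 + ‖a‖)⁻¹ * (1 + ‖b‖)⁻¹ * ‖b‖ ≤ 1 := by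
      rw [mul_assoc]
      calc (1 + ‖a‖)⁻¹ * ((1 + ‖b‖)⁻¹ * ‖b‖) ≤ 1 * 1 := by
            apply mul_le_mul (inv_le_one_of_one_le₀ (by linarith [norm_nonneg a]))
              _ (by positivity) zero_le_one
            rw [inv_mul_le_iff₀ hb]; linarith [norm_nonneg b]
        _ = 1 := by ring
    calc |‖b‖ - ‖a‖| * ((1 + ‖a‖)⁻¹ * (1 + ‖b‖)⁻¹) * ‖b‖
        = |‖b‖ - ‖a‖| * ((1 + ‖a‖)⁻¹ * (1 + ‖b‖)⁻¹ * ‖b‖) := by ring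
      _ ≤ ‖a - b‖ * 1 := mul_le_mul h3 h4 (by positivity) (norm_nonneg _)
      _ = 1 * ‖a - b‖ := by ring
  linarith [norm_nonneg (a-b)]

lemma inner_T_sum_pos (y w : RN N) (hy : y ≠ 0) :
    0 < ⟪(1 + ‖y + w‖)⁻¹ • (y + w), y⟫ + ⟪(1 + ‖y - w‖)⁻¹ • (y - w), y⟫ := by
  set A := ‖y + w‖ with hA
  set B := ‖y - w‖ with hB
  set s : ℝ := ⟪w, y⟫ with hs
  set c : ℝ := ‖y‖ ^ 2 with hc
  have hApos : (0:ℝ) < 1 + A := by positivity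
  have hBpos : (0:ℝ) < 1 + B := by positivity
  have hcpos : 0 < c := by
    rw [hc]; exact pow_pos (norm_pos_iff.2 hy) 2
  have e1 : ⟪(1 + A)⁻¹ • (y + w), y⟫ = (1 + A)⁻¹ * (c + s) := by
    rw [real_inner_smul_left, inner_add_left, real_inner_self_eq_norm_sq, ← hs, ← hc]
  have e2 : ⟪(1 + B)⁻¹ • (y - w), y⟫ = (1 + B)⁻¹ * (c - s) := by
    rw [real_inner_smul_left, inner_sub_left, real_inner_self_eq_norm_sq, ← hs, ← hc]
  rw [e1, e2]
  have hCS : s ^ 2 ≤ c * ‖w‖ ^ 2 := by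
    have := real_inner_mul_inner_self_le w y
    rw [real_inner_self_eq_norm_sq, real_inner_self_eq_norm_sq] at this
    calc s ^ 2 = ⟪w,y⟫ * ⟪w,y⟫ := by rw [hs]; ring
      _ ≤ ‖w‖^2 * ‖y‖^2 := this
      _ = c * ‖w‖^2 := by rw [hc]; ring
  have hBA : B ^ 2 - A ^ 2 = -(4 * s) := by
    rw [hA, hB, norm_add_sq_real, norm_sub_sq_real, real_inner_comm w y, ← hs]; ring
  have hABw : 2 * ‖w‖ ≤ A + B := by
    have : ‖(y + w) - (y - w)‖ ≤ A + B := norm_sub_le _ _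
    have e : (y + w) - (y - w) = w + w := by abel
    rw [e] at this
    calc 2 * ‖w‖ = ‖w + w‖ := by rw [← two_smul ℝ w, norm_smul]; simp
      _ ≤ A + B := this
  have hABy : 2 * ‖y‖ ≤ A + B := by
    have : ‖(y + w) + (y - w)‖ ≤ A + B := norm_add_le _ _
    have e : (y + w) + (y - w) = y + y := by abel
    rw [e] at this
    calc 2 * ‖y‖ = ‖y + y‖ := by rw [← two_smul ℝ y, norm_smul]; simp
      _ ≤ A + B := this
  have hABpos : 0 < A + B := by
    have : 0 < ‖y‖ := norm_pos_iff.2 hy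
    linarith
  have h2 : (c * (A + B) + s * (B - A)) * (A + B) = c * (A + B) ^ 2 + s * (B ^ 2 - A ^ 2) := by
    ring
  have h3 : 0 ≤ c * (A + B) ^ 2 - 4 * s ^ 2 := by
    nlinarith [mul_nonneg hcpos.le (mul_nonneg (sub_nonneg.2 hABw)
      (by positivity : (0:ℝ) ≤ A + B + 2 * ‖w‖)), hCS]
  have h4 : 0 ≤ c * (A + B) + s * (B - A) := by
    have h5 : 0 ≤ (c * (A + B) + s * (B - A)) * (A + B) := by
      rw [h2, hBA]; nlinarith [h3]
    exact nonneg_of_mul_nonneg_right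
      (by linarith [h5] : 0 ≤ (A+B) * (c * (A + B) + s * (B - A))) hABpos
  have hP : 0 < (c + s) * (1 + B) + (c - s) * (1 + A) := by nlinarith [h4, hcpos]
  have eq : (1 + A)⁻¹ * (c + s) + (1 + B)⁻¹ * (c - s)
      = ((c + s) * (1 + B) + (c - s) * (1 + A)) / ((1 + A) * (1 + B)) := by
    field_simp
  rw [eq]
  exact div_pos hP (by positivity)

lemma T_sum_small (y w : RN N) (r K : ℝ) (hr : 0 < r) (hy : ‖y‖ ≤ r)
    (hK : 2 * r ≤ K) (hw : K ≤ ‖w‖) :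
    ‖(1 + ‖y + w‖)⁻¹ • (y + w) + (1 + ‖y - w‖)⁻¹ • (y - w)‖ ≤ 6 * r / (1 + K - r) := by
  set A := ‖y + w‖ with hA
  set B := ‖y - w‖ with hB
  have hd : (0:ℝ) < 1 + K - r := by linarith
  have hApos : (0:ℝ) < 1 + A := by positivity
  have hBpos : (0:ℝ) < 1 + B := by positivity
  have hAlow : ‖w‖ - r ≤ A := by
    have h := norm_sub_le (y + w) y
    simp only [add_sub_cancel_left] at h
    rw [hA]; linarith
  have hBlow : ‖w‖ - r ≤ B := by
    have h := norm_sub_le (y - w) y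
    have e : (y - w) - y = -w := by abel
    rw [e, norm_neg] at h
    rw [hB]; linarith
  have hdA : 1 + K - r ≤ 1 + A := by linarith
  have hdB : 1 + K - r ≤ 1 + B := by linarith
  have key : (1 + A)⁻¹ • (y + w) + (1 + B)⁻¹ • (y - w)
      = ((1 + A)⁻¹ + (1 + B)⁻¹) • y + ((1 + A)⁻¹ - (1 + B)⁻¹) • w := by
    rw [smul_add, smul_sub, add_smul, sub_smul]; abel
  rw [key]
  refine le_trans (norm_add_le _ _) ?_
  rw [norm_smul, norm_smul, Real.norm_eq_abs, Real.norm_eq_abs]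
  have hbd1 : |(1 + A)⁻¹ + (1 + B)⁻¹| * ‖y‖ ≤ 2 * r / (1 + K - r) := by
    rw [abs_of_pos (by positivity)]
    have h1 : (1 + A)⁻¹ ≤ (1 + K - r)⁻¹ := inv_anti₀ hd hdA
    have h2 : (1 + B)⁻¹ ≤ (1 + K - r)⁻¹ := inv_anti₀ hd hdB
    calc ((1 + A)⁻¹ + (1 + B)⁻¹) * ‖y‖ ≤ (2 * (1 + K - r)⁻¹) * r := by
          apply mul_le_mul (by linarith) hy (norm_nonneg _) (by positivity)
      _ = 2 * r / (1 + K - r) := by field_simp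
  have hbd2 : |(1 + A)⁻¹ - (1 + B)⁻¹| * ‖w‖ ≤ 4 * r / (1 + K - r) := by
    have e : (1 + A)⁻¹ - (1 + B)⁻¹ = (B - A) * ((1 + A)⁻¹ * (1 + B)⁻¹) := by
      field_simp
      ring
    have hABy : |B - A| ≤ 2 * r := by
      have h := abs_norm_sub_norm_le (y + w) (w - y)
      have e2 : (y + w) - (w - y) = y + y := by abel
      rw [e2] at h
      have e3 : ‖y + y‖ ≤ 2 * r := by
        calc ‖y + y‖ ≤ ‖y‖ + ‖y‖ := norm_add_le _ _
          _ ≤ 2 * r := by linarith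
      have e4 : ‖w - y‖ = B := by rw [hB, norm_sub_rev]
      rw [e4, ← hA, abs_sub_comm] at h
      exact le_trans h e3
    rw [e, abs_mul, abs_of_pos (show (0:ℝ) < (1+A)⁻¹*(1+B)⁻¹ by positivity)]
    have hw2 : (1 + A)⁻¹ * ‖w‖ ≤ 2 := by
      rw [inv_mul_le_iff₀ hApos]
      nlinarith
    calc |B - A| * ((1 + A)⁻¹ * (1 + B)⁻¹) * ‖w‖
        = |B - A| * (1 + B)⁻¹ * ((1 + A)⁻¹ * ‖w‖) := by ring
      _ ≤ (2 * r) * (1 + K - r)⁻¹ * 2 := by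
          apply mul_le_mul _ hw2 (by positivity) (by positivity)
          apply mul_le_mul hABy (inv_anti₀ hd hdB) (by positivity) (by linarith)
      _ = 4 * r / (1 + K - r) := by field_simp; ring
  have : 2 * r / (1 + K - r) + 4 * r / (1 + K - r) = 6 * r / (1 + K - r) := by ring
  linarith

lemma integrable_rho_smul {E : Type*} [NormedAddCommGroup E] [NormedSpace ℝ E]
    (ρ : RN N → ℝ) (y : RN N) (δ : ℝ) (hc : Continuous ρ)
    (hs : ∀ x, δ ≤ ‖x - y‖ → ρ x = 0) (F : RN N → E) (hF : Continuous F) :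
    Integrable (fun x => ρ x • F x) := by
  apply Continuous.integrable_of_hasCompactSupport (hc.smul hF)
  apply HasCompactSupport.intro (isCompact_closedBall y δ)
  intro x hx
  simp only [mem_closedBall, not_le, dist_eq_norm] at hx
  show ρ x • F x = 0
  rw [hs x hx.le, zero_smul]

lemma continuous_T : Continuous (fun x : RN N => (1 + ‖x‖)⁻¹ • x) :=
  (((continuous_const.add continuous_norm).inv₀
    (fun x => (by positivity : (0:ℝ) < 1 + ‖x‖).ne')).smul continuous_id)

lemma integral_pos_aux (ρ : RN N → ℝ) (hint : Integrable ρ) (h0 : ∀ x, 0 ≤ ρ x)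
    (hc : Continuous ρ) (x₀ : RN N) (hx₀ : 0 < ρ x₀) : 0 < ∫ x, ρ x := by
  rw [integral_pos_iff_support_of_nonneg h0 hint]
  exact (hc.isOpen_support).measure_pos volume ⟨x₀, hx₀.ne'⟩

lemma partA (ρ : RN N → ℝ) (y : RN N) (δ : ℝ) (hδ : 0 < δ) (hc : Continuous ρ)
    (h0 : ∀ x, 0 ≤ ρ x) (hs : ∀ x, δ ≤ ‖x - y‖ → ρ x = 0)
    (hm : 0 < ∫ x, ρ x) :
    (∫ x, ‖(1 + ‖x‖)⁻¹ • x - (∫ x, ρ x)⁻¹ • ∫ x, ρ x • ((1 + ‖x‖)⁻¹ • x)‖ * ρ x)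
      / ∫ x, ρ x ≤ 4 * δ := by
  set T : RN N → RN N := fun x => (1 + ‖x‖)⁻¹ • x with hT
  set m := ∫ x, ρ x with hmdef
  set w := ∫ x, ρ x • T x with hw
  have hρint : Integrable ρ := by
    have := integrable_rho_smul ρ y δ hc hs (fun _ => (1:ℝ)) continuous_const
    simpa using this
  have hTint : Integrable (fun x => ρ x • T x) :=
    integrable_rho_smul ρ y δ hc hs T continuous_T
  have hball : ∀ x, ‖x - y‖ < δ → ‖T x - m⁻¹ • w‖ ≤ 4 * δ := by
    intro x hx
    have key : m • T x - w = ∫ x', ρ x' • (T x - T x') := by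
      have e : (fun x' => ρ x' • (T x - T x')) = fun x' => ρ x' • T x - ρ x' • T x' := by
        funext x'; rw [smul_sub]
      rw [e, integral_sub (integrable_rho_smul ρ y δ hc hs (fun _ => T x) continuous_const)
        hTint, integral_smul_const]
    have hbd : ‖m • T x - w‖ ≤ 4 * δ * m := by
      rw [key]
      refine le_trans (norm_integral_le_integral_norm _) ?_
      have hpt : ∀ x', ‖ρ x' • (T x - T x')‖ ≤ 4 * δ * ρ x' := by
        intro x'
        rw [norm_smul, Real.norm_eq_abs, abs_of_nonneg (h0 x')]
        by_cases hx' : δ ≤ ‖x' - y‖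
        · rw [hs x' hx']; simp
        · push_neg at hx'
          have hl : ‖T x - T x'‖ ≤ 2 * ‖x - x'‖ := T_lip x x'
          have htr : ‖x - x'‖ ≤ ‖x - y‖ + ‖x' - y‖ := by
            have := dist_triangle x y x'
            simp only [dist_eq_norm] at this
            rw [norm_sub_rev x' y] at *
            linarith [this]
          calc ρ x' * ‖T x - T x'‖ ≤ ρ x' * (4 * δ) := by
                apply mul_le_mul_of_nonneg_left _ (h0 x')
                linarith
            _ = 4 * δ * ρ x' := by ring
      calc ∫ x', ‖ρ x' • (T x - T x')‖ ≤ ∫ x', 4 * δ * ρ x' := by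
            apply integral_mono _ (hρint.const_mul _) hpt
            have := (integrable_rho_smul ρ y δ hc hs (fun x' => T x - T x')
              (continuous_const.sub continuous_T)).norm
            simpa [norm_smul, Real.norm_eq_abs] using this
        _ = 4 * δ * m := by rw [integral_const_mul]
    have e2 : T x - m⁻¹ • w = m⁻¹ • (m • T x - w) := by
      rw [smul_sub, smul_smul, inv_mul_cancel₀ hm.ne', one_smul]
    rw [e2, norm_smul, Real.norm_eq_abs, abs_of_pos (inv_pos.2 hm)]
    calc m⁻¹ * ‖m • T x - w‖ ≤ m⁻¹ * (4 * δ * m) :=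
          mul_le_mul_of_nonneg_left hbd (inv_pos.2 hm).le
      _ = 4 * δ := by field_simp
  rw [div_le_iff₀ hm]
  calc (∫ x, ‖T x - m⁻¹ • w‖ * ρ x) ≤ ∫ x, 4 * δ * ρ x := by
        apply integral_mono _ (hρint.const_mul _) _
        · have := (integrable_rho_smul ρ y δ hc hs
            (fun x => ‖T x - m⁻¹ • w‖) (continuous_T.sub continuous_const).norm)
          simpa [mul_comm] using this
        · intro x
          by_cases hx : δ ≤ ‖x - y‖
          · simp only []
            rw [hs x hx]
            simp
          · push_neg at hx
            calc ‖T x - m⁻¹ • w‖ * ρ x ≤ (4 * δ) * ρ x :=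
                  mul_le_mul_of_nonneg_right (hball x hx) (h0 x)
              _ = 4 * δ * ρ x := by ring
    _ = 4 * δ * m := by rw [integral_const_mul]

lemma inner_T_sum_pos' (y x : RN N) (hy : y ≠ 0) :
    0 < ⟪(1 + ‖x‖)⁻¹ • x, y⟫ + ⟪(1 + ‖(2:ℝ) • y - x‖)⁻¹ • ((2:ℝ) • y - x), y⟫ := by
  have e1 : y + (x - y) = x := by abel
  have e2 : y - (x - y) = (2:ℝ) • y - x := by rw [two_smul]; abel
  have := inner_T_sum_pos y (x - y) hy
  rwa [e1, e2] at this

lemma inner_T_sum_pos'' (y x : RN N) (hy : y ≠ 0) :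
    0 < ⟪y, (1 + ‖x‖)⁻¹ • x⟫ + ⟪y, (1 + ‖(2:ℝ) • y - x‖)⁻¹ • ((2:ℝ) • y - x)⟫ := by
  have h1 := real_inner_comm ((1 + ‖x‖)⁻¹ • x) y
  have h2 := real_inner_comm ((1 + ‖(2:ℝ) • y - x‖)⁻¹ • ((2:ℝ) • y - x)) y
  rw [h1, h2]
  exact inner_T_sum_pos' y x hy

lemma partC (ρ : RN N → ℝ) (y : RN N) (δ : ℝ) (hc : Continuous ρ)
    (h0 : ∀ x, 0 ≤ ρ x) (hs : ∀ x, δ ≤ ‖x - y‖ → ρ x = 0)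
    (hsym : ∀ x, ρ ((2:ℝ) • y - x) = ρ x) (hy : y ≠ 0) (hρy : 0 < ρ y) :
    0 < ⟪(∫ x, ρ x)⁻¹ • ∫ x, ρ x • ((1 + ‖x‖)⁻¹ • x), y⟫ := by
  set T : RN N → RN N := fun x => (1 + ‖x‖)⁻¹ • x with hT
  have hρint : Integrable ρ := by
    have := integrable_rho_smul ρ y δ hc hs (fun _ => (1:ℝ)) continuous_const
    simpa using this
  have hm : 0 < ∫ x, ρ x := integral_pos_aux ρ hρint h0 hc y hρy
  have hTint : Integrable (fun x => ρ x • T x) :=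
    integrable_rho_smul ρ y δ hc hs T continuous_T
  rw [real_inner_smul_left]
  apply mul_pos (inv_pos.2 hm)
  rw [real_inner_comm]
  rw [← integral_inner hTint y]
  have hTrc : Continuous (fun x => T ((2:ℝ) • y - x)) :=
    continuous_T.comp (continuous_const.sub continuous_id)
  set f0 : RN N → ℝ := fun x => ⟪y, ρ x • T x⟫ with hf0
  have hf0e : ∀ x, f0 x = ρ x * ⟪y, T x⟫ := fun x => real_inner_smul_right y _ _
  have hf0int : Integrable f0 := by
    have := integrable_rho_smul ρ y δ hc hs (fun x => ⟪y, T x⟫)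
      (Continuous.inner continuous_const continuous_T)
    apply Integrable.congr this
    filter_upwards with x
    rw [hf0e x, smul_eq_mul]
  set g0 : RN N → ℝ := fun x => ρ x * ⟪y, T ((2:ℝ) • y - x)⟫ with hg0
  have hg0int : Integrable g0 := by
    have := integrable_rho_smul ρ y δ hc hs (fun x => ⟪y, T ((2:ℝ) • y - x)⟫)
      (Continuous.inner continuous_const hTrc)
    apply Integrable.congr this
    filter_upwards with x
    rw [smul_eq_mul]
  have hrefl : ∫ x, f0 x = ∫ x, g0 x := by
    have h1 : ∫ x, f0 x = ∫ x, f0 ((2:ℝ) • y - x) :=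
      (integral_sub_left_eq_self f0 volume ((2:ℝ) • y)).symm
    rw [h1]
    congr 1
    funext x
    rw [hf0e _, hsym x, hg0]
  set H : RN N → ℝ := fun x => ρ x * (⟪y, T x⟫ + ⟪y, T ((2:ℝ) • y - x)⟫) with hH
  have hHe : ∀ x, H x = f0 x + g0 x := by
    intro x; rw [hH, hf0e, hg0]; ring
  have hH0 : ∀ x, 0 ≤ H x := by
    intro x
    rcases eq_or_lt_of_le (h0 x) with h | h
    · simp [hH, ← h]
    · exact le_of_lt (mul_pos h (inner_T_sum_pos'' y x hy))
  have hHc : Continuous H :=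
    hc.mul ((Continuous.inner continuous_const continuous_T).add
      (Continuous.inner continuous_const hTrc))
  have hHint : Integrable H := by
    apply Integrable.congr (hf0int.add hg0int)
    filter_upwards with x
    rw [hHe x, Pi.add_apply]
  have hHy : 0 < H y := mul_pos hρy (inner_T_sum_pos'' y y hy)
  have hHpos : 0 < ∫ x, H x := integral_pos_aux H hHint hH0 hHc y hHy
  have : ∫ x, H x = (∫ x, f0 x) + ∫ x, g0 x := by
    rw [← integral_add hf0int hg0int]
    congr 1; funext x; rw [hHe x]
  rw [this, ← hrefl] at hHpos
  linarith

def Tm {N : ℕ} (x : RN N) : RN N := (1 + ‖x‖)⁻¹ • x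

lemma Tm_def (x : RN N) : Tm x = (1 + ‖x‖)⁻¹ • x := rfl

lemma continuous_Tm : Continuous (fun x : RN N => Tm x) := continuous_T

lemma Tm_sum_small (y w : RN N) (r K : ℝ) (hr : 0 < r) (hy : ‖y‖ ≤ r)
    (hK : 2 * r ≤ K) (hw : K ≤ ‖w‖) :
    ‖Tm (y + w) + Tm (y - w)‖ ≤ 6 * r / (1 + K - r) :=
  T_sum_small y w r K hr hy hK hw

lemma norm_Tm_le_one (x : RN N) : ‖Tm x‖ ≤ 1 := norm_T_le_one x
lemma one_sub_norm_Tm (x : RN N) : |‖Tm x‖ - 1| = (1 + ‖x‖)⁻¹ := one_sub_norm_T x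

set_option maxHeartbeats 2000000 in
lemma partB (ρ : RN N → ℝ) (y : RN N) (δ : ℝ) (hc : Continuous ρ)
    (h0 : ∀ x, 0 ≤ ρ x) (hs : ∀ x, δ ≤ ‖x - y‖ → ρ x = 0)
    (hsym : ∀ x, ρ ((2:ℝ) • y - x) = ρ x) (hm : 0 < ∫ x, ρ x)
    (r K ε : ℝ) (hr : 0 < r) (hε : 0 < ε) (hy : ‖y‖ ≤ r) (hK1 : 2 * r ≤ K)
    (hK2 : 6 * r / (1 + K - r) ≤ ε / 4) (hK3 : 1 / (1 + K - r) ≤ ε / 4)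
    (hsmall : ∫ x in ball y K, ρ x < ε * (∫ x, ρ x) / 8) :
    |(∫ x, ‖(1 + ‖x‖)⁻¹ • x - (∫ x, ρ x)⁻¹ • ∫ x, ρ x • ((1 + ‖x‖)⁻¹ • x)‖ * ρ x)
      / (∫ x, ρ x) - 1| < ε := by
  have hd : 0 < 1 + K - r := by linarith
  have hρint : Integrable ρ := by
    have := integrable_rho_smul ρ y δ hc hs (fun _ => (1:ℝ)) continuous_const
    simpa using this
  have hTrc : Continuous (fun x : RN N => Tm ((2:ℝ) • y - x)) :=
    continuous_Tm.comp (continuous_const.sub continuous_id)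
  have hTint : Integrable (fun x => ρ x • Tm x) :=
    integrable_rho_smul ρ y δ hc hs Tm continuous_Tm
  have hTrint : Integrable (fun x => ρ x • Tm ((2:ℝ) • y - x)) :=
    integrable_rho_smul ρ y δ hc hs _ hTrc
  have hmK0 : (0:ℝ) ≤ ∫ x in ball y K, ρ x :=
    setIntegral_nonneg measurableSet_ball (fun x _ => h0 x)
  have hgint : Integrable ((ball y K).indicator ρ) := hρint.indicator measurableSet_ball
  have hgeq : ∫ x, (ball y K).indicator ρ x = ∫ x in ball y K, ρ x :=
    integral_indicator measurableSet_ball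
  have hrefl : ∫ x, ρ x • Tm x = ∫ x, ρ x • Tm ((2:ℝ) • y - x) := by
    have h1 : ∫ x, ρ x • Tm x = ∫ x, ρ ((2:ℝ) • y - x) • Tm ((2:ℝ) • y - x) :=
      (integral_sub_left_eq_self (fun x => ρ x • Tm x) volume ((2:ℝ) • y)).symm
    rw [h1]
    congr 1; funext x; rw [hsym x]
  have h2w : (2:ℝ) • (∫ x, ρ x • Tm x) = ∫ x, ρ x • (Tm x + Tm ((2:ℝ) • y - x)) := by
    have e : (fun x => ρ x • (Tm x + Tm ((2:ℝ) • y - x)))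
        = fun x => ρ x • Tm x + ρ x • Tm ((2:ℝ) • y - x) := by
      funext x; rw [smul_add]
    rw [e, integral_add hTint hTrint, ← hrefl, two_smul]
  have hWb : ‖∫ x, ρ x • Tm x‖
      ≤ (∫ x in ball y K, ρ x) + 3 * r / (1 + K - r) * ∫ x, ρ x := by
    have hn : 2 * ‖∫ x, ρ x • Tm x‖
        ≤ 2 * (∫ x in ball y K, ρ x) + 6 * r / (1 + K - r) * ∫ x, ρ x := by
      have e0 : 2 * ‖∫ x, ρ x • Tm x‖ = ‖(2:ℝ) • (∫ x, ρ x • Tm x)‖ := by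
        rw [norm_smul, Real.norm_eq_abs]; norm_num
      rw [e0, h2w]
      refine le_trans (norm_integral_le_integral_norm _) ?_
      have hpt : ∀ x, ‖ρ x • (Tm x + Tm ((2:ℝ) • y - x))‖
          ≤ 2 * (ball y K).indicator ρ x + 6 * r / (1 + K - r) * ρ x := by
        intro x
        rw [norm_smul, Real.norm_eq_abs, abs_of_nonneg (h0 x)]
        by_cases hxb : x ∈ ball y K
        · rw [Set.indicator_of_mem hxb]
          have h2 : ‖Tm x + Tm ((2:ℝ) • y - x)‖ ≤ 2 := by
            refine le_trans (norm_add_le _ _) ?_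
            linarith [norm_Tm_le_one x, norm_Tm_le_one ((2:ℝ) • y - x)]
          have hrd : 0 ≤ 6 * r / (1 + K - r) * ρ x :=
            mul_nonneg (div_nonneg (by linarith) hd.le) (h0 x)
          nlinarith [h0 x, mul_le_mul_of_nonneg_left h2 (h0 x)]
        · rw [Set.indicator_of_notMem hxb]
          have hxK : K ≤ ‖x - y‖ := by
            simp only [mem_ball, not_lt, dist_eq_norm] at hxb
            exact hxb
          have hsmall2 : ‖Tm x + Tm ((2:ℝ) • y - x)‖ ≤ 6 * r / (1 + K - r) := by
            have e1 : y + (x - y) = x := by abel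
            have e2 : y - (x - y) = (2:ℝ) • y - x := by rw [two_smul]; abel
            have h5 := Tm_sum_small y (x - y) r K hr hy hK1 hxK
            rwa [e1, e2] at h5
          calc ρ x * ‖Tm x + Tm ((2:ℝ) • y - x)‖ ≤ ρ x * (6 * r / (1 + K - r)) :=
                mul_le_mul_of_nonneg_left hsmall2 (h0 x)
            _ = 2 * 0 + 6 * r / (1 + K - r) * ρ x := by ring
      calc ∫ x, ‖ρ x • (Tm x + Tm ((2:ℝ) • y - x))‖
          ≤ ∫ x, (2 * (ball y K).indicator ρ x + 6 * r / (1 + K - r) * ρ x) := by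
            apply integral_mono _ ((hgint.const_mul 2).add (hρint.const_mul _)) hpt
            have := (integrable_rho_smul ρ y δ hc hs
              (fun x => Tm x + Tm ((2:ℝ) • y - x)) (continuous_Tm.add hTrc)).norm
            simpa [norm_smul, Real.norm_eq_abs] using this
        _ = 2 * (∫ x in ball y K, ρ x) + 6 * r / (1 + K - r) * ∫ x, ρ x := by
            rw [integral_add (hgint.const_mul 2) (hρint.const_mul _),
              integral_const_mul, integral_const_mul, hgeq]
    have e3 : 6 * r / (1 + K - r) * (∫ x, ρ x)
        = 2 * (3 * r / (1 + K - r) * ∫ x, ρ x) := by ring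
    linarith [hn, e3]
  simp only [← Tm_def]
  obtain ⟨m, hmdef⟩ : ∃ m, ∫ x, ρ x = m := ⟨_, rfl⟩
  obtain ⟨w0, hwdef⟩ : ∃ w0, ∫ x, ρ x • Tm x = w0 := ⟨_, rfl⟩
  obtain ⟨mK, hmKdef⟩ : ∃ mK, ∫ x in ball y K, ρ x = mK := ⟨_, rfl⟩
  rw [hmdef, hwdef]
  rw [hmdef] at hm hsmall
  rw [hmKdef] at hsmall hmK0
  rw [hmdef, hwdef, hmKdef] at hWb
  set ξ : RN N := m⁻¹ • w0 with hxidef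
  have hxi : ‖ξ‖ ≤ m⁻¹ * mK + 3 * r / (1 + K - r) := by
    rw [hxidef, norm_smul, Real.norm_eq_abs, abs_of_pos (inv_pos.2 hm)]
    calc m⁻¹ * ‖w0‖ ≤ m⁻¹ * (mK + 3 * r / (1 + K - r) * m) :=
          mul_le_mul_of_nonneg_left hWb (inv_pos.2 hm).le
      _ = m⁻¹ * mK + 3 * r / (1 + K - r) := by field_simp; try ring
  have hnumint : Integrable (fun x => ‖Tm x - ξ‖ * ρ x) := by
    have := integrable_rho_smul ρ y δ hc hs (fun x => ‖Tm x - ξ‖)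
      ((continuous_Tm.sub continuous_const).norm)
    apply Integrable.congr this
    filter_upwards with x
    rw [smul_eq_mul, mul_comm]
  obtain ⟨num, hnumdef⟩ : ∃ num, ∫ x, ‖Tm x - ξ‖ * ρ x = num := ⟨_, rfl⟩
  rw [hnumdef]
  have hdiffint : Integrable (fun x => (‖Tm x - ξ‖ - 1) * ρ x) := by
    have e : (fun x => (‖Tm x - ξ‖ - 1) * ρ x)
        = fun x => ‖Tm x - ξ‖ * ρ x - ρ x := by funext x; ring
    rw [e]; exact hnumint.sub hρint
  have hsub : num - m = ∫ x, (‖Tm x - ξ‖ - 1) * ρ x := by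
    rw [← hnumdef, ← hmdef, ← integral_sub hnumint hρint]
    congr 1; funext x; ring
  have hbnd_int : Integrable (fun x => (‖ξ‖ + (1 + ‖x‖)⁻¹) * ρ x) := by
    have := integrable_rho_smul ρ y δ hc hs (fun x => ‖ξ‖ + (1 + ‖x‖)⁻¹)
      (continuous_const.add ((continuous_const.add continuous_norm).inv₀
        (fun x => (by positivity : (0:ℝ) < 1 + ‖x‖).ne')))
    apply Integrable.congr this
    filter_upwards with x
    rw [smul_eq_mul, mul_comm]
  have habs : |num - m| ≤ ∫ x, (‖ξ‖ + (1 + ‖x‖)⁻¹) * ρ x := by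
    rw [hsub]
    have h1 : |∫ x, (‖Tm x - ξ‖ - 1) * ρ x| ≤ ∫ x, |(‖Tm x - ξ‖ - 1) * ρ x| := by
      rw [← Real.norm_eq_abs]
      refine le_trans (norm_integral_le_integral_norm _) ?_
      apply le_of_eq; congr 1
    refine le_trans h1 ?_
    apply integral_mono hdiffint.abs hbnd_int
    intro x
    show |(‖Tm x - ξ‖ - 1) * ρ x| ≤ (‖ξ‖ + (1 + ‖x‖)⁻¹) * ρ x
    rw [abs_mul, abs_of_nonneg (h0 x)]
    apply mul_le_mul_of_nonneg_right _ (h0 x)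
    have h2 : |‖Tm x - ξ‖ - ‖Tm x‖| ≤ ‖ξ‖ := by
      have := abs_norm_sub_norm_le (Tm x - ξ) (Tm x)
      simpa using this
    have h3 : |‖Tm x‖ - 1| = (1 + ‖x‖)⁻¹ := one_sub_norm_Tm x
    calc |‖Tm x - ξ‖ - 1| = |(‖Tm x - ξ‖ - ‖Tm x‖) + (‖Tm x‖ - 1)| := by ring_nf
      _ ≤ |‖Tm x - ξ‖ - ‖Tm x‖| + |‖Tm x‖ - 1| := abs_add_le _ _
      _ ≤ ‖ξ‖ + (1 + ‖x‖)⁻¹ := by rw [h3]; linarith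
  have hinv_int : Integrable (fun x => (1 + ‖x‖)⁻¹ * ρ x) := by
    have := integrable_rho_smul ρ y δ hc hs (fun x => (1 + ‖x‖)⁻¹)
      ((continuous_const.add continuous_norm).inv₀ (fun x => (by positivity : (0:ℝ) < 1 + ‖x‖).ne'))
    apply Integrable.congr this
    filter_upwards with x
    rw [smul_eq_mul, mul_comm]
  have hsecond : ∫ x, (‖ξ‖ + (1 + ‖x‖)⁻¹) * ρ x
      ≤ ‖ξ‖ * m + (mK + 1 / (1 + K - r) * m) := by
    have e : (fun x => (‖ξ‖ + (1 + ‖x‖)⁻¹) * ρ x)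
        = fun x => ‖ξ‖ * ρ x + (1 + ‖x‖)⁻¹ * ρ x := by funext x; ring
    rw [e, integral_add (hρint.const_mul _) hinv_int]
    have h4 : ∫ x, (1 + ‖x‖)⁻¹ * ρ x ≤ mK + 1 / (1 + K - r) * m := by
      have hpt : ∀ x, (1 + ‖x‖)⁻¹ * ρ x
          ≤ (ball y K).indicator ρ x + 1 / (1 + K - r) * ρ x := by
        intro x
        by_cases hxb : x ∈ ball y K
        · rw [Set.indicator_of_mem hxb]
          have h6 : (1 + ‖x‖)⁻¹ ≤ 1 := inv_le_one_of_one_le₀ (by linarith [norm_nonneg x])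
          have h7 : 0 ≤ 1 / (1 + K - r) * ρ x :=
            mul_nonneg (le_of_lt (one_div_pos.2 hd)) (h0 x)
          nlinarith [h0 x]
        · rw [Set.indicator_of_notMem hxb]
          have hxK : K ≤ ‖x - y‖ := by
            simp only [mem_ball, not_lt, dist_eq_norm] at hxb
            exact hxb
          have hnx : K - r ≤ ‖x‖ := by
            have h5 : ‖x - y‖ ≤ ‖x‖ + ‖y‖ := norm_sub_le x y
            linarith
          have h6 : (1 + ‖x‖)⁻¹ ≤ 1 / (1 + K - r) := by
            rw [one_div]
            apply inv_anti₀ hd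
            linarith
          calc (1 + ‖x‖)⁻¹ * ρ x ≤ 1 / (1 + K - r) * ρ x :=
                mul_le_mul_of_nonneg_right h6 (h0 x)
            _ = 0 + 1 / (1 + K - r) * ρ x := by ring
      calc ∫ x, (1 + ‖x‖)⁻¹ * ρ x
          ≤ ∫ x, ((ball y K).indicator ρ x + 1 / (1 + K - r) * ρ x) :=
            integral_mono hinv_int (hgint.add (hρint.const_mul _)) hpt
        _ = mK + 1 / (1 + K - r) * m := by
            rw [integral_add hgint (hρint.const_mul _), integral_const_mul, hgeq,
              hmKdef, hmdef]
    have h5 : ∫ x, ‖ξ‖ * ρ x = ‖ξ‖ * m := by rw [integral_const_mul, hmdef]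
    linarith
  have hfin : |num / m - 1| ≤ ‖ξ‖ + m⁻¹ * mK + 1 / (1 + K - r) := by
    have e : num / m - 1 = (num - m) / m := by field_simp
    rw [e, abs_div, abs_of_pos hm, div_le_iff₀ hm]
    have e2 : (‖ξ‖ + m⁻¹ * mK + 1 / (1 + K - r)) * m
        = ‖ξ‖ * m + (mK + 1 / (1 + K - r) * m) := by
      field_simp; ring
    rw [e2]
    exact le_trans habs hsecond
  have hmk : m⁻¹ * mK < ε / 8 := by
    have h8 := mul_lt_mul_of_pos_left hsmall (inv_pos.2 hm)
    calc m⁻¹ * mK < m⁻¹ * (ε * m / 8) := h8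
      _ = ε / 8 := by field_simp
  have h3r : 3 * r / (1 + K - r) ≤ ε / 8 := by
    have e9 : 6 * r / (1 + K - r) = 2 * (3 * r / (1 + K - r)) := by ring
    linarith [hK2]
  calc |num / m - 1| ≤ ‖ξ‖ + m⁻¹ * mK + 1 / (1 + K - r) := hfin
    _ ≤ (m⁻¹ * mK + 3 * r / (1 + K - r)) + m⁻¹ * mK + 1 / (1 + K - r) := by
        linarith [hxi]
    _ < ε := by linarith

lemma rhoF_eq (hN : 5 ≤ N) (μ1 μ2 β : ℝ) (k1 k2 : ℝ)
    (ϑ : RN N → ℝ) (hϑ0 : ∀ x, 0 ≤ ϑ x) (δ : ℝ) (hδ : 0 < δ) (y : RN N) (x : RN N) :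
    rhoF μ1 μ2 β (fun x => Real.sqrt k1 * thetaScaled ϑ δ y x)
      (fun x => Real.sqrt k2 * thetaScaled ϑ δ y x) x
    = (μ1 * Real.sqrt k1 ^ tstar N
        + 2 * β * (Real.sqrt k1 ^ (tstar N / 2) * Real.sqrt k2 ^ (tstar N / 2))
        + μ2 * Real.sqrt k2 ^ tstar N)
      * (δ ^ (-(N:ℝ)) * ϑ (δ⁻¹ • (x - y)) ^ tstar N) := by
  have ht : 0 < tstar N := tstar_pos hN
  have hN2 : ((N:ℝ) - 2) ≠ 0 := by
    have h5 : (5:ℝ) ≤ (N:ℝ) := by exact_mod_cast hN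
    linarith
  simp only [rhoF, posp, thetaScaled]
  set t : ℝ := tstar N with htdef
  set a : ℝ := -(((N : ℝ) - 2) / 2) with ha
  have hda : (0:ℝ) < δ ^ a := Real.rpow_pos_of_pos hδ a
  set b : ℝ := ϑ (δ⁻¹ • (x - y)) with hbdef
  have hb : 0 ≤ b := hϑ0 _
  set D : ℝ := δ ^ a * b with hDdef
  have hD0 : 0 ≤ D := mul_nonneg hda.le hb
  have hdat : (δ ^ a) ^ t = δ ^ (-(N:ℝ)) := by
    rw [← Real.rpow_mul hδ.le]
    congr 1
    rw [ha, htdef, tstar]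
    field_simp
  have e6 : δ ^ (-(N:ℝ)) * b ^ t = D ^ t := by
    rw [hDdef, Real.mul_rpow hda.le hb, hdat]
  rw [max_eq_left (mul_nonneg (Real.sqrt_nonneg k1) hD0),
    max_eq_left (mul_nonneg (Real.sqrt_nonneg k2) hD0)]
  rw [Real.mul_rpow (Real.sqrt_nonneg k1) hD0, Real.mul_rpow (Real.sqrt_nonneg k1) hD0,
    Real.mul_rpow (Real.sqrt_nonneg k2) hD0, Real.mul_rpow (Real.sqrt_nonneg k2) hD0]
  rw [e6]
  have e5 : D ^ (t/2) * D ^ (t/2) = D ^ t := by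
    rw [← Real.rpow_add_of_nonneg hD0 (by linarith [tstar_pos hN, htdef] : (0:ℝ) ≤ t/2)
      (by linarith [tstar_pos hN, htdef] : (0:ℝ) ≤ t/2)]
    congr 1
    ring
  linear_combination (2 * β * (Real.sqrt k1 ^ (t/2) * Real.sqrt k2 ^ (t/2))) * e5

lemma R_cont (hN : 5 ≤ N) (C δ : ℝ) (y : RN N) (ϑ : RN N → ℝ) (hc : Continuous ϑ) :
    Continuous (fun x : RN N => C * (δ ^ (-(N:ℝ)) * ϑ (δ⁻¹ • (x - y)) ^ tstar N)) := by
  apply continuous_const.mul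
  apply continuous_const.mul
  have h1 : Continuous fun x : RN N => ϑ (δ⁻¹ • (x - y)) :=
    hc.comp (by fun_prop)
  exact h1.rpow_const (fun x => Or.inr (tstar_pos hN).le)

lemma R_nonneg (C δ : ℝ) (hC : 0 ≤ C) (hδ : 0 < δ) (y : RN N) (ϑ : RN N → ℝ)
    (hϑ0 : ∀ z, 0 ≤ ϑ z) (x : RN N) :
    0 ≤ C * (δ ^ (-(N:ℝ)) * ϑ (δ⁻¹ • (x - y)) ^ tstar N) :=
  mul_nonneg hC (mul_nonneg (Real.rpow_nonneg hδ.le _)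
    (Real.rpow_nonneg (hϑ0 _) _))

lemma R_supp (hN : 5 ≤ N) (C δ : ℝ) (hδ : 0 < δ) (y : RN N) (ϑ : RN N → ℝ)
    (hϑ : ThetaGood ϑ) (x : RN N) (hx : δ ≤ ‖x - y‖) :
    C * (δ ^ (-(N:ℝ)) * ϑ (δ⁻¹ • (x - y)) ^ tstar N) = 0 := by
  have h1 : (1:ℝ) ≤ ‖δ⁻¹ • (x - y)‖ := by
    rw [norm_smul, Real.norm_eq_abs, abs_of_pos (inv_pos.2 hδ)]
    rw [← inv_mul_cancel₀ hδ.ne']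
    exact mul_le_mul_of_nonneg_left hx (inv_pos.2 hδ).le
  rw [theta_outside ϑ hϑ _ h1, Real.zero_rpow (tstar_pos hN).ne', mul_zero, mul_zero]

lemma R_symm (C δ : ℝ) (y : RN N) (ϑ : RN N → ℝ) (hϑ : ThetaGood ϑ) (x : RN N) :
    C * (δ ^ (-(N:ℝ)) * ϑ (δ⁻¹ • ((2:ℝ) • y - x - y)) ^ tstar N)
      = C * (δ ^ (-(N:ℝ)) * ϑ (δ⁻¹ • (x - y)) ^ tstar N) := by
  have e : (2:ℝ) • y - x - y = -(x - y) := by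
    rw [two_smul]; abel
  rw [e, smul_neg, theta_even ϑ hϑ]

lemma R_mass (C δ : ℝ) (hδ : 0 < δ) (y : RN N) (ϑ : RN N → ℝ) :
    ∫ x, C * (δ ^ (-(N:ℝ)) * ϑ (δ⁻¹ • (x - y)) ^ tstar N)
      = C * ∫ z, ϑ z ^ tstar N := by
  have e : (fun x : RN N => C * (δ ^ (-(N:ℝ)) * ϑ (δ⁻¹ • (x - y)) ^ tstar N))
      = fun x : RN N => (C * δ ^ (-(N:ℝ)))
          * ((fun z : RN N => ϑ z ^ tstar N) (δ⁻¹ • (x - y))) := by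
    funext x; ring
  rw [e, MeasureTheory.integral_const_mul]
  have h1 : ∫ x : RN N, (fun z : RN N => ϑ z ^ tstar N) (δ⁻¹ • (x - y))
      = ∫ x : RN N, (fun z : RN N => ϑ z ^ tstar N) (δ⁻¹ • x) :=
    integral_sub_right_eq_self (fun x => (fun z : RN N => ϑ z ^ tstar N) (δ⁻¹ • x)) y
  have h2 : ∫ x : RN N, (fun z : RN N => ϑ z ^ tstar N) (δ⁻¹ • x)
      = δ ^ (Module.finrank ℝ (RN N)) • ∫ z : RN N, ϑ z ^ tstar N :=
    MeasureTheory.Measure.integral_comp_inv_smul_of_nonneg volume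
      (fun z : RN N => ϑ z ^ tstar N) hδ.le
  rw [h1, h2, finrank_euclideanSpace_fin, smul_eq_mul]
  rw [Real.rpow_neg hδ.le, Real.rpow_natCast]
  have hpow : (0:ℝ) < δ ^ N := pow_pos hδ N
  field_simp

end Aux

set_option maxHeartbeats 2000000 in
/-- Lemma 4.5: behaviour of the concentration `γ` and barycenter `ξ` of the
pair `(√k₁ ϑ_{δ,y}, √k₂ ϑ_{δ,y})`. -/
theorem statement14 (N : ℕ) (hN : 5 ≤ N) (μ1 μ2 β : ℝ)
    (hμ1 : 0 < μ1) (hμ2 : 0 < μ2) (hβ : max μ1 μ2 < β)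
    (ϑ : RN N → ℝ) (hϑ : ThetaGood ϑ) (r : ℝ) (hr : 0 < r) :
    (∀ ε > (0 : ℝ), ∃ δ0 > (0 : ℝ), ∀ δ : ℝ, 0 < δ → δ < δ0 → ∀ y : RN N,
      conc μ1 μ2 β
        (fun x => Real.sqrt ((β - μ2) / (β ^ 2 - μ1 * μ2)) * thetaScaled ϑ δ y x)
        (fun x => Real.sqrt ((β - μ1) / (β ^ 2 - μ1 * μ2)) * thetaScaled ϑ δ y x)
        < ε) ∧
    (∀ ε > (0 : ℝ), ∃ Δ : ℝ, ∀ δ : ℝ, Δ < δ → ∀ y : RN N, ‖y‖ ≤ r →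
      |conc μ1 μ2 β
        (fun x => Real.sqrt ((β - μ2) / (β ^ 2 - μ1 * μ2)) * thetaScaled ϑ δ y x)
        (fun x => Real.sqrt ((β - μ1) / (β ^ 2 - μ1 * μ2)) * thetaScaled ϑ δ y x)
        - 1| < ε) ∧
    (∀ y : RN N, y ≠ 0 → ∀ δ > (0 : ℝ),
      0 < ⟪bary μ1 μ2 β
        (fun x => Real.sqrt ((β - μ2) / (β ^ 2 - μ1 * μ2)) * thetaScaled ϑ δ y x)
        (fun x => Real.sqrt ((β - μ1) / (β ^ 2 - μ1 * μ2)) * thetaScaled ϑ δ y x),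
        y⟫) := by
  have hμ1β : μ1 < β := lt_of_le_of_lt (le_max_left _ _) hβ
  have hμ2β : μ2 < β := lt_of_le_of_lt (le_max_right _ _) hβ
  have hβ0 : 0 < β := lt_trans hμ1 hμ1β
  have hden : 0 < β ^ 2 - μ1 * μ2 := by nlinarith
  set k1 := (β - μ2) / (β ^ 2 - μ1 * μ2) with hk1def
  set k2 := (β - μ1) / (β ^ 2 - μ1 * μ2) with hk2def
  have hk1 : 0 < k1 := div_pos (by linarith) hden
  have hk2 : 0 < k2 := div_pos (by linarith) hden
  have ht : 0 < tstar N := tstar_pos hN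
  have hϑc : Continuous ϑ := hϑ.1.continuous
  have hϑ0 : ∀ z, 0 ≤ ϑ z := hϑ.2.2.2.1
  obtain ⟨Cc, hCceq⟩ : ∃ C : ℝ, C = μ1 * Real.sqrt k1 ^ tstar N
      + 2 * β * (Real.sqrt k1 ^ (tstar N / 2) * Real.sqrt k2 ^ (tstar N / 2))
      + μ2 * Real.sqrt k2 ^ tstar N := ⟨_, rfl⟩
  have hs1 : 0 < Real.sqrt k1 := Real.sqrt_pos.2 hk1
  have hs2 : 0 < Real.sqrt k2 := Real.sqrt_pos.2 hk2
  have hCc : 0 < Cc := by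
    rw [hCceq]
    have h1 := Real.rpow_pos_of_pos hs1 (tstar N)
    have h2 := Real.rpow_pos_of_pos hs2 (tstar N)
    have h3 := Real.rpow_pos_of_pos hs1 (tstar N / 2)
    have h4 := Real.rpow_pos_of_pos hs2 (tstar N / 2)
    have := mul_pos hμ1 h1
    have := mul_pos hμ2 h2
    have := mul_pos (mul_pos (by linarith : (0:ℝ) < 2 * β) h3) h4
    nlinarith
  have hREq : ∀ δ : ℝ, 0 < δ → ∀ y : RN N,
      rhoF μ1 μ2 β (fun x => Real.sqrt k1 * thetaScaled ϑ δ y x)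
        (fun x => Real.sqrt k2 * thetaScaled ϑ δ y x)
      = fun x => Cc * (δ ^ (-(N:ℝ)) * ϑ (δ⁻¹ • (x - y)) ^ tstar N) := by
    intro δ hδ y
    funext x
    rw [rhoF_eq hN μ1 μ2 β k1 k2 ϑ hϑ0 δ hδ y x, hCceq]
  have hϑ0pos : 0 < ϑ 0 := theta_zero_pos hN ϑ hϑ
  have hI0int : Integrable (fun z : RN N => ϑ z ^ tstar N) := by
    apply Continuous.integrable_of_hasCompactSupport
      (hϑc.rpow_const (fun z => Or.inr ht.le))
    apply HasCompactSupport.intro (isCompact_closedBall (0:RN N) 1)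
    intro z hz
    simp only [mem_closedBall, not_le, dist_zero_right] at hz
    rw [theta_outside ϑ hϑ z hz.le, Real.zero_rpow ht.ne']
  have hI0pos : 0 < ∫ z : RN N, ϑ z ^ tstar N := by
    apply integral_pos_aux _ hI0int (fun z => Real.rpow_nonneg (hϑ0 z) _)
      (hϑc.rpow_const (fun z => Or.inr ht.le)) 0
    exact Real.rpow_pos_of_pos hϑ0pos _
  have hbundle : ∀ δ : ℝ, 0 < δ → ∀ y : RN N,
      0 < ∫ x, Cc * (δ ^ (-(N:ℝ)) * ϑ (δ⁻¹ • (x - y)) ^ tstar N) := by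
    intro δ hδ y
    rw [R_mass Cc δ hδ y ϑ]
    exact mul_pos hCc hI0pos
  refine ⟨?_, ?_, ?_⟩
  -- part (a)
  · intro ε hε
    refine ⟨ε / 4, by positivity, ?_⟩
    intro δ hδ hδε y
    have hle := partA (fun x => Cc * (δ ^ (-(N:ℝ)) * ϑ (δ⁻¹ • (x - y)) ^ tstar N)) y δ hδ
      (R_cont hN Cc δ y ϑ hϑc) (R_nonneg Cc δ hCc.le hδ y ϑ hϑ0)
      (fun x hx => R_supp hN Cc δ hδ y ϑ hϑ x hx) (hbundle δ hδ y)
    simp only [conc, bary, hREq δ hδ y]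
    exact lt_of_le_of_lt hle (by linarith)
  -- part (b)
  · intro ε hε
    obtain ⟨K, hKdef⟩ : ∃ K : ℝ, K = max (2 * r) (r + (24 * r + 4) / ε) := ⟨_, rfl⟩
    have hK1 : 2 * r ≤ K := hKdef ▸ le_max_left _ _
    have hKr : r + (24 * r + 4) / ε ≤ K := hKdef ▸ le_max_right _ _
    have hKpos : 0 < K := by linarith
    have hd0 : 0 < 1 + K - r := by linarith
    have hq : (24 * r + 4) / ε ≤ 1 + K - r := by linarith
    have hqε : ε / 4 * ((24 * r + 4) / ε) = 6 * r + 1 := by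
      field_simp
      ring
    have hK2 : 6 * r / (1 + K - r) ≤ ε / 4 := by
      rw [div_le_iff₀ hd0]
      have := mul_le_mul_of_nonneg_left hq (by positivity : (0:ℝ) ≤ ε / 4)
      calc 6 * r ≤ ε / 4 * ((24 * r + 4) / ε) := by rw [hqε]; linarith
        _ ≤ ε / 4 * (1 + K - r) := this
    have hK3 : 1 / (1 + K - r) ≤ ε / 4 := by
      rw [div_le_iff₀ hd0]
      have := mul_le_mul_of_nonneg_left hq (by positivity : (0:ℝ) ≤ ε / 4)
      calc (1:ℝ) ≤ ε / 4 * ((24 * r + 4) / ε) := by rw [hqε]; linarith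
        _ ≤ ε / 4 * (1 + K - r) := this
    obtain ⟨V0, hV0def⟩ : ∃ v : ℝ, v = (volume (ball (0:RN N) K)).toReal := ⟨_, rfl⟩
    have hV0pos : 0 < V0 := by
      rw [hV0def]
      exact ENNReal.toReal_pos (measure_ball_pos volume 0 hKpos).ne' measure_ball_lt_top.ne
    obtain ⟨Mt, hMtdef⟩ : ∃ v : ℝ, v = ϑ 0 ^ tstar N := ⟨_, rfl⟩
    have hMtpos : 0 < Mt := hMtdef ▸ Real.rpow_pos_of_pos hϑ0pos _
    obtain ⟨m0, hm0def⟩ : ∃ v : ℝ, v = Cc * ∫ z : RN N, ϑ z ^ tstar N := ⟨_, rfl⟩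
    have hm0pos : 0 < m0 := hm0def ▸ mul_pos hCc hI0pos
    refine ⟨max 1 (8 * (Cc * Mt * V0) / (ε * m0)), ?_⟩
    intro δ hδΔ y hyr
    have hδ1 : (1:ℝ) < δ := lt_of_le_of_lt (le_max_left _ _) hδΔ
    have hδ : 0 < δ := by linarith
    have hδQ : 8 * (Cc * Mt * V0) / (ε * m0) < δ :=
      lt_of_le_of_lt (le_max_right _ _) hδΔ
    have hmassEq : ∫ x, Cc * (δ ^ (-(N:ℝ)) * ϑ (δ⁻¹ • (x - y)) ^ tstar N) = m0 := by
      rw [R_mass Cc δ hδ y ϑ, hm0def]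
    have hRint : Integrable
        (fun x => Cc * (δ ^ (-(N:ℝ)) * ϑ (δ⁻¹ • (x - y)) ^ tstar N)) := by
      apply Continuous.integrable_of_hasCompactSupport (R_cont hN Cc δ y ϑ hϑc)
      apply HasCompactSupport.intro (isCompact_closedBall y δ)
      intro x hx
      simp only [mem_closedBall, not_le, dist_eq_norm] at hx
      exact R_supp hN Cc δ hδ y ϑ hϑ x hx.le
    have hRsup : ∀ x, Cc * (δ ^ (-(N:ℝ)) * ϑ (δ⁻¹ • (x - y)) ^ tstar N)
        ≤ Cc * (δ ^ (-(N:ℝ)) * Mt) := by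
      intro x
      apply mul_le_mul_of_nonneg_left _ hCc.le
      apply mul_le_mul_of_nonneg_left _ (Real.rpow_nonneg hδ.le _)
      rw [hMtdef]
      exact Real.rpow_le_rpow (hϑ0 _) (theta_bound ϑ hϑ _) ht.le
    have hball_le : ∫ x in ball y K, Cc * (δ ^ (-(N:ℝ)) * ϑ (δ⁻¹ • (x - y)) ^ tstar N)
        ≤ Cc * Mt * V0 * δ ^ (-(N:ℝ)) := by
      calc ∫ x in ball y K, Cc * (δ ^ (-(N:ℝ)) * ϑ (δ⁻¹ • (x - y)) ^ tstar N)
          ≤ ∫ _x in ball y K, Cc * (δ ^ (-(N:ℝ)) * Mt) :=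
            setIntegral_mono_on hRint.integrableOn
              (integrableOn_const measure_ball_lt_top.ne) measurableSet_ball
              (fun x _ => hRsup x)
        _ = (volume (ball y K)).toReal • (Cc * (δ ^ (-(N:ℝ)) * Mt)) := setIntegral_const _
        _ = Cc * Mt * V0 * δ ^ (-(N:ℝ)) := by
            rw [Measure.addHaar_ball_center volume y K, smul_eq_mul, hV0def]
            ring
    have hδN : δ ^ (-(N:ℝ)) ≤ δ⁻¹ := by
      have h5 : (5:ℝ) ≤ (N:ℝ) := by exact_mod_cast hN
      have h1 : δ ^ (-(N:ℝ)) ≤ δ ^ (-(1:ℝ)) :=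
        Real.rpow_le_rpow_of_exponent_le hδ1.le (by linarith)
      rwa [Real.rpow_neg_one] at h1
    have hPpos : 0 < Cc * Mt * V0 := mul_pos (mul_pos hCc hMtpos) hV0pos
    have hstep : Cc * Mt * V0 * δ⁻¹ < ε * m0 / 8 := by
      have h2 : 8 * (Cc * Mt * V0) < δ * (ε * m0) :=
        (div_lt_iff₀ (by positivity)).1 hδQ
      rw [← div_eq_mul_inv, div_lt_iff₀ hδ]
      nlinarith
    have hsmall : ∫ x in ball y K, Cc * (δ ^ (-(N:ℝ)) * ϑ (δ⁻¹ • (x - y)) ^ tstar N)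
        < ε * (∫ x, Cc * (δ ^ (-(N:ℝ)) * ϑ (δ⁻¹ • (x - y)) ^ tstar N)) / 8 := by
      rw [hmassEq]
      calc ∫ x in ball y K, Cc * (δ ^ (-(N:ℝ)) * ϑ (δ⁻¹ • (x - y)) ^ tstar N)
          ≤ Cc * Mt * V0 * δ ^ (-(N:ℝ)) := hball_le
        _ ≤ Cc * Mt * V0 * δ⁻¹ := mul_le_mul_of_nonneg_left hδN hPpos.le
        _ < ε * m0 / 8 := hstep
    have hfinal := partB (fun x => Cc * (δ ^ (-(N:ℝ)) * ϑ (δ⁻¹ • (x - y)) ^ tstar N))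
      y δ (R_cont hN Cc δ y ϑ hϑc) (R_nonneg Cc δ hCc.le hδ y ϑ hϑ0)
      (fun x hx => R_supp hN Cc δ hδ y ϑ hϑ x hx)
      (fun x => R_symm Cc δ y ϑ hϑ x) (hbundle δ hδ y)
      r K ε hr hε hyr hK1 hK2 hK3 hsmall
    simp only [conc, bary, hREq δ hδ y]
    exact hfinal
  -- part (c)
  · intro y hy δ hδ
    have hRy : 0 < Cc * (δ ^ (-(N:ℝ)) * ϑ (δ⁻¹ • (y - y)) ^ tstar N) := by
      rw [sub_self, smul_zero]
      exact mul_pos hCc (mul_pos (Real.rpow_pos_of_pos hδ _)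
        (Real.rpow_pos_of_pos hϑ0pos _))
    have hfinal := partC (fun x => Cc * (δ ^ (-(N:ℝ)) * ϑ (δ⁻¹ • (x - y)) ^ tstar N))
      y δ (R_cont hN Cc δ y ϑ hϑc) (R_nonneg Cc δ hCc.le hδ y ϑ hϑ0)
      (fun x hx => R_supp hN Cc δ hδ y ϑ hϑ x hx)
      (fun x => R_symm Cc δ y ϑ hϑ x) hy hRy
    simp only [bary, hREq δ hδ y]
    exact hfinal
end
end

section
/- Assume N ≥ 5, μ1, μ2 > 0 and β > max{μ1, μ2}. Let r̄ > 0 and 0 < δ1 < 1/2 < δ2 be such that γ(√k1·ϑ_{δ1,y}, √k2·ϑ_{δ1,y}) < 1/2 for all y ∈ ℝ^N and γ(√k1·ϑ_{δ2,y}, √k2·ϑ_{δ2,y}) > 1/2 for all |y| ≤ r̄, and set 𝓗 := {(δ,y) : δ ∈ [δ1,δ2], |y| < r̄}. Then there exist (δ̃, ỹ) ∈ ∂𝓗 and (δ̄, ȳ) in the interior of 𝓗 such that ξ(√k1·ϑ_{δ̃,ỹ}, √k2·ϑ_{δ̃,ỹ}) = 0 with γ(√k1·ϑ_{δ̃,ỹ},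 √k2·ϑ_{δ̃,ỹ}) > 1/2, and ξ(√k1·ϑ_{δ̄,ȳ}, √k2·ϑ_{δ̄,ȳ}) = 0 with γ(√k1·ϑ_{δ̄,ȳ}, √k2·ϑ_{δ̄,ȳ}) = 1/2. -/
open MeasureTheory Metric Filter Topology RealInnerProductSpace

noncomputable section

variable {N : ℕ}

/-- `√k₁` -/
def sqk1 (μ1 μ2 β : ℝ) : ℝ := Real.sqrt ((β - μ2) / (β ^ 2 - μ1 * μ2))

/-- `√k₂` -/
def sqk2 (μ1 μ2 β : ℝ) : ℝ := Real.sqrt ((β - μ1) / (β ^ 2 - μ1 * μ2))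

/-- `c* := inf{I(u,v) : (u,v) ∈ 𝒩, ξ(u,v) = 0, γ(u,v) = 1/2}` -/
def cStar {N : ℕ} (V1 V2 : RN N → ℝ) (l1 l2 μ1 μ2 β : ℝ) : ℝ :=
  sInf {c | ∃ u v : RN N → ℝ, NehariMem V1 V2 l1 l2 μ1 μ2 β u v ∧
    bary μ1 μ2 β u v = 0 ∧ conc μ1 μ2 β u v = 1 / 2 ∧
    c = energy V1 V2 l1 l2 μ1 μ2 β u v}

/-- the sharp Hardy–Littlewood–Sobolev constant `C(N,4)` -/
def CN4 (N : ℕ) : ℝ :=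
  Real.pi ^ 2 * (Real.Gamma (((N : ℝ) - 4) / 2) / Real.Gamma ((2 * (N : ℝ) - 4) / 2)) *
    (Real.Gamma ((N : ℝ) / 2) / Real.Gamma (N : ℝ)) ^ (-(((N : ℝ) - 4) / (N : ℝ)))

/-- the quantity `min{√((β²-μ₁μ₂)/(μ₁(2β-μ₁-μ₂))), √((β²-μ₁μ₂)/(μ₂(2β-μ₁-μ₂))), √2}` -/
def minRoot (μ1 μ2 β : ℝ) : ℝ :=
  min (Real.sqrt ((β ^ 2 - μ1 * μ2) / (μ1 * (2 * β - μ1 - μ2))))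
    (min (Real.sqrt ((β ^ 2 - μ1 * μ2) / (μ2 * (2 * β - μ1 - μ2)))) (Real.sqrt 2))

/-- boundary of `𝓗 = [δ₁,δ₂] × {|y| < r̄}` -/
def onBoundaryH {N : ℕ} (δ1 δ2 r : ℝ) (δ : ℝ) (y : RN N) : Prop :=
  ((δ = δ1 ∨ δ = δ2) ∧ ‖y‖ ≤ r) ∨ (δ1 ≤ δ ∧ δ ≤ δ2 ∧ ‖y‖ = r)

-- auxiliary lemmas


/-- scalar profile of the density -/
def G0 (μ1 μ2 β c1 c2 t s : ℝ) : ℝ :=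
  μ1 * (c1 * s) ^ t + 2 * β * ((c1 * s) ^ (t / 2) * (c2 * s) ^ (t / 2))
    + μ2 * (c2 * s) ^ t

lemma g0_nonneg {μ1 μ2 β c1 c2 t : ℝ} (hμ1 : 0 ≤ μ1) (hμ2 : 0 ≤ μ2) (hβ : 0 ≤ β)
    {s : ℝ} (hc1 : 0 ≤ c1) (hc2 : 0 ≤ c2) (hs : 0 ≤ s) :
    0 ≤ G0 μ1 μ2 β c1 c2 t s := by
  have h1 : (0:ℝ) ≤ (c1 * s) ^ t := Real.rpow_nonneg (by positivity) _
  have h2 : (0:ℝ) ≤ (c1 * s) ^ (t/2) := Real.rpow_nonneg (by positivity) _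
  have h3 : (0:ℝ) ≤ (c2 * s) ^ (t/2) := Real.rpow_nonneg (by positivity) _
  have h4 : (0:ℝ) ≤ (c2 * s) ^ t := Real.rpow_nonneg (by positivity) _
  unfold G0; positivity

lemma g0_zero {μ1 μ2 β c1 c2 t : ℝ} (ht : 0 < t) : G0 μ1 μ2 β c1 c2 t 0 = 0 := by
  have h2 : t / 2 ≠ 0 := by positivity
  simp [G0, Real.zero_rpow ht.ne', Real.zero_rpow h2, mul_zero]

lemma g0_mono {μ1 μ2 β c1 c2 t : ℝ} (hμ1 : 0 ≤ μ1) (hμ2 : 0 ≤ μ2) (hβ : 0 ≤ β)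
    (hc1 : 0 ≤ c1) (hc2 : 0 ≤ c2) (ht : 0 < t) {s1 s2 : ℝ} (hs1 : 0 ≤ s1) (hs : s1 ≤ s2) :
    G0 μ1 μ2 β c1 c2 t s1 ≤ G0 μ1 μ2 β c1 c2 t s2 := by
  have e1 : c1 * s1 ≤ c1 * s2 := by nlinarith
  have e2 : c2 * s1 ≤ c2 * s2 := by nlinarith
  have p1 : (0:ℝ) ≤ c1 * s1 := by positivity
  have p2 : (0:ℝ) ≤ c2 * s1 := by positivity
  have r1 := Real.rpow_le_rpow p1 e1 ht.le
  have r4 := Real.rpow_le_rpow p2 e2 ht.le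
  have r2 := Real.rpow_le_rpow p1 e1 (by positivity : (0:ℝ) ≤ t/2)
  have r3 := Real.rpow_le_rpow p2 e2 (by positivity : (0:ℝ) ≤ t/2)
  have m : (c1*s1)^(t/2) * (c2*s1)^(t/2) ≤ (c1*s2)^(t/2) * (c2*s2)^(t/2) :=
    mul_le_mul r2 r3 (Real.rpow_nonneg p2 _) (Real.rpow_nonneg (le_trans p1 e1) _)
  unfold G0
  have := mul_le_mul_of_nonneg_left r1 hμ1
  have := mul_le_mul_of_nonneg_left r4 hμ2
  have := mul_le_mul_of_nonneg_left m (by positivity : (0:ℝ) ≤ 2*β)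
  linarith

lemma g0_pos {μ1 μ2 β c1 c2 t : ℝ} (hμ1 : 0 < μ1) (hμ2 : 0 ≤ μ2) (hβ : 0 ≤ β)
    (hc1 : 0 < c1) (hc2 : 0 ≤ c2) {s : ℝ} (hs : 0 < s) :
    0 < G0 μ1 μ2 β c1 c2 t s := by
  have h1 : (0:ℝ) < μ1 * (c1 * s) ^ t :=
    mul_pos hμ1 (Real.rpow_pos_of_pos (by positivity) _)
  have h2 : (0:ℝ) ≤ 2 * β * ((c1 * s) ^ (t/2) * (c2 * s) ^ (t/2)) := by
    have := Real.rpow_nonneg (show (0:ℝ) ≤ c1 * s by positivity) (t/2)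
    have := Real.rpow_nonneg (show (0:ℝ) ≤ c2 * s by positivity) (t/2)
    positivity
  have h3 : (0:ℝ) ≤ μ2 * (c2 * s) ^ t := by
    have := Real.rpow_nonneg (show (0:ℝ) ≤ c2 * s by positivity) t
    positivity
  unfold G0; linarith

lemma g0_cont {μ1 μ2 β c1 c2 t : ℝ} (ht : 0 ≤ t) : Continuous (G0 μ1 μ2 β c1 c2 t) := by
  have hrt : Continuous fun s : ℝ => s ^ t :=
    continuous_iff_continuousAt.2 fun x => Real.continuousAt_rpow_const x t (Or.inr ht)
  have hrt2 : Continuous fun s : ℝ => s ^ (t/2) :=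
    continuous_iff_continuousAt.2 fun x => Real.continuousAt_rpow_const x (t/2)
      (Or.inr (by positivity))
  have hm1 : Continuous fun s : ℝ => c1 * s := continuous_const.mul continuous_id
  have hm2 : Continuous fun s : ℝ => c2 * s := continuous_const.mul continuous_id
  unfold G0
  exact ((continuous_const.mul (hrt.comp hm1)).add
    (continuous_const.mul ((hrt2.comp hm1).mul (hrt2.comp hm2)))).add
    (continuous_const.mul (hrt.comp hm2))

section Theta

variable {ϑ : RN N → ℝ}

lemma ts_apply (ϑ : RN N → ℝ) (δ : ℝ) (x : RN N) :
    thetaScaled ϑ δ 0 x = δ ^ (-(((N : ℝ) - 2) / 2)) * ϑ (δ⁻¹ • x) := by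
  simp [thetaScaled]

lemma ts_nonneg (hnn : ∀ x, 0 ≤ ϑ x) {δ : ℝ} (hδ : 0 < δ) (x : RN N) :
    0 ≤ thetaScaled ϑ δ 0 x :=
  mul_nonneg (Real.rpow_nonneg hδ.le _) (hnn _)

lemma ts_zero_of (hsupp1 : ∀ z : RN N, 1 ≤ ‖z‖ → ϑ z = 0) {δ : ℝ} (hδ : 0 < δ)
    {x : RN N} (hx : δ ≤ ‖x‖) : thetaScaled ϑ δ 0 x = 0 := by
  rw [ts_apply]
  have h1 : (1:ℝ) ≤ ‖δ⁻¹ • x‖ := by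
    rw [norm_smul, Real.norm_eq_abs, abs_of_pos (inv_pos.2 hδ), ← div_eq_inv_mul]
    exact (one_le_div hδ).2 hx
  rw [hsupp1 _ h1, mul_zero]

lemma ts_le (hnn : ∀ x, 0 ≤ ϑ x) (hθ0 : ∀ z, ϑ z ≤ ϑ 0)
    (ha : -(((N : ℝ) - 2) / 2) ≤ 0) {l δ : ℝ} (hl : 0 < l) (hlδ : l ≤ δ) (x : RN N) :
    thetaScaled ϑ δ 0 x ≤ l ^ (-(((N : ℝ) - 2) / 2)) * ϑ 0 := by
  rw [ts_apply]
  exact mul_le_mul (Real.rpow_le_rpow_of_nonpos hl hlδ ha) (hθ0 _) (hnn _)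
    (Real.rpow_nonneg hl.le _)

lemma ts_cont_x (hcont : Continuous ϑ) (δ : ℝ) : Continuous (thetaScaled ϑ δ 0) := by
  unfold thetaScaled
  exact continuous_const.mul (hcont.comp (by fun_prop))

lemma ts_cont_δ (hcont : Continuous ϑ) {δ0 : ℝ} (hδ0 : δ0 ≠ 0) (x : RN N) :
    ContinuousAt (fun δ => thetaScaled ϑ δ 0 x) δ0 := by
  unfold thetaScaled
  exact (Real.continuousAt_rpow_const δ0 _ (Or.inl hδ0)).mul
    (hcont.continuousAt.comp ((continuousAt_inv₀ hδ0).smul continuousAt_const))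

end Theta

/-- The key dominated-convergence continuity lemma. -/
lemma cont_aux {ϑ : RN N → ℝ} (hcont : Continuous ϑ) (hnn : ∀ x, 0 ≤ ϑ x)
    (hθ0 : ∀ z, ϑ z ≤ ϑ 0) (hsupp1 : ∀ z : RN N, 1 ≤ ‖z‖ → ϑ z = 0)
    (ha : -(((N : ℝ) - 2) / 2) ≤ 0)
    {μ1 μ2 β c1 c2 t : ℝ} (hμ1 : 0 ≤ μ1) (hμ2 : 0 ≤ μ2) (hβ : 0 ≤ β)
    (hc1 : 0 ≤ c1) (hc2 : 0 ≤ c2) (ht : 0 < t)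
    {h : RN N → ℝ} (hhc : Continuous h) (hh0 : ∀ x, 0 ≤ h x) (hh1 : ∀ x, h x ≤ 1)
    {δ0 : ℝ} (hδ0 : 0 < δ0) :
    ContinuousAt (fun δ => ∫ x, h x * G0 μ1 μ2 β c1 c2 t (thetaScaled ϑ δ 0 x)) δ0 := by
  set B : ℝ := (δ0/2) ^ (-(((N : ℝ) - 2) / 2)) * ϑ 0 with hB
  apply continuousAt_of_dominated (bound := (closedBall (0 : RN N) (δ0+1)).indicator
      (fun _ => G0 μ1 μ2 β c1 c2 t B))
  · exact Eventually.of_forall fun δ =>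
      (hhc.mul ((g0_cont ht.le).comp (ts_cont_x hcont δ))).aestronglyMeasurable
  · have hmem : Set.Ioo (δ0/2) (δ0+1) ∈ 𝓝 δ0 := Ioo_mem_nhds (by linarith) (by linarith)
    filter_upwards [hmem] with δ hδ
    apply ae_of_all
    intro x
    have hδpos : 0 < δ := lt_trans (by linarith) hδ.1
    rw [Real.norm_eq_abs, abs_of_nonneg (mul_nonneg (hh0 x)
      (g0_nonneg hμ1 hμ2 hβ hc1 hc2 (ts_nonneg hnn hδpos x)))]
    by_cases hx : x ∈ closedBall (0 : RN N) (δ0+1)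
    · rw [Set.indicator_of_mem hx]
      calc h x * G0 μ1 μ2 β c1 c2 t (thetaScaled ϑ δ 0 x)
          ≤ 1 * G0 μ1 μ2 β c1 c2 t B := by
            apply mul_le_mul (hh1 x) _ (g0_nonneg hμ1 hμ2 hβ hc1 hc2
              (ts_nonneg hnn hδpos x)) zero_le_one
            exact g0_mono hμ1 hμ2 hβ hc1 hc2 ht (ts_nonneg hnn hδpos x)
              (ts_le hnn hθ0 ha (by linarith) hδ.1.le x)
        _ = G0 μ1 μ2 β c1 c2 t B := one_mul _
    · rw [Set.indicator_of_notMem hx]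
      have hxn : δ ≤ ‖x‖ := by
        rw [mem_closedBall, dist_zero_right, not_le] at hx
        linarith [hδ.2]
      rw [ts_zero_of hsupp1 hδpos hxn, g0_zero ht, mul_zero]
  · rw [integrable_indicator_iff measurableSet_closedBall]
    exact integrableOn_const measure_closedBall_lt_top.ne
  · apply ae_of_all
    intro x
    exact continuousAt_const.mul ((g0_cont ht.le).continuousAt.comp
      (ts_cont_δ hcont hδ0.ne' x))

lemma den_pos {ϑ : RN N → ℝ} (hcont : Continuous ϑ) (hnn : ∀ x, 0 ≤ ϑ x)
    (hθpos : 0 < ϑ 0) (hsupp1 : ∀ z : RN N, 1 ≤ ‖z‖ → ϑ z = 0)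
    {μ1 μ2 β c1 c2 t : ℝ} (hμ1 : 0 < μ1) (hμ2 : 0 ≤ μ2) (hβ : 0 ≤ β)
    (hc1 : 0 < c1) (hc2 : 0 ≤ c2) (ht : 0 < t) {δ : ℝ} (hδ : 0 < δ) :
    0 < ∫ x, G0 μ1 μ2 β c1 c2 t (thetaScaled ϑ δ 0 x) := by
  set F : RN N → ℝ := fun x => G0 μ1 μ2 β c1 c2 t (thetaScaled ϑ δ 0 x) with hF
  have hFc : Continuous F := (g0_cont ht.le).comp (ts_cont_x hcont δ)
  have hcs : HasCompactSupport F := by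
    apply HasCompactSupport.intro (isCompact_closedBall (0 : RN N) δ)
    intro x hx
    rw [mem_closedBall, dist_zero_right, not_le] at hx
    rw [hF]
    simp only
    rw [ts_zero_of hsupp1 hδ hx.le, g0_zero ht]
  have hint : Integrable F := hFc.integrable_of_hasCompactSupport hcs
  have hFnn : 0 ≤ F := fun x => g0_nonneg hμ1.le hμ2 hβ hc1.le hc2 (ts_nonneg hnn hδ x)
  rw [integral_pos_iff_support_of_nonneg hFnn hint]
  have hU : IsOpen {x : RN N | 0 < F x} := isOpen_lt continuous_const hFc
  have h0 : (0 : RN N) ∈ {x : RN N | 0 < F x} := by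
    have : 0 < thetaScaled ϑ δ 0 0 := by
      rw [ts_apply]
      simp only [smul_zero]
      exact mul_pos (Real.rpow_pos_of_pos hδ _) hθpos
    exact g0_pos hμ1 hμ2 hβ hc1 hc2 this
  calc (0 : ENNReal) < volume {x : RN N | 0 < F x} := hU.measure_pos volume ⟨0, h0⟩
    _ ≤ volume (Function.support F) := measure_mono fun x hx => ne_of_gt hx

lemma bary_zero {μ1 μ2 β : ℝ} {u v : RN N → ℝ}
    (hu : ∀ x, u (-x) = u x) (hv : ∀ x, v (-x) = v x) :
    bary μ1 μ2 β u v = 0 := by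
  have hρ : ∀ x, rhoF μ1 μ2 β u v (-x) = rhoF μ1 μ2 β u v x := by
    intro x; unfold rhoF posp; rw [hu, hv]
  set F : RN N → RN N := fun x => rhoF μ1 μ2 β u v x • ((1 + ‖x‖)⁻¹ • x) with hFdef
  have hodd : ∀ x, F (-x) = -F x := by
    intro x
    simp only [hFdef, hρ, norm_neg, smul_neg]
  have hI : (∫ x, F x) = -∫ x, F x := by
    conv_lhs => rw [← integral_neg_eq_self F volume]
    simp only [hodd, integral_neg]
  have hI0 : (∫ x, F x) = 0 := by
    have h2 : (2:ℝ) • (∫ x, F x) = 0 := by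
      rw [two_smul]; nth_rewrite 1 [hI]; exact neg_add_cancel _
    rcases smul_eq_zero.1 h2 with h | h
    · norm_num at h
    · exact h
  unfold bary
  rw [hI0, smul_zero]

/-- the weight `x ↦ ‖x/(1+‖x‖)‖` -/
def hfun (N : ℕ) : RN N → ℝ := fun x => ‖(1 + ‖x‖)⁻¹ • x‖

lemma hfun_cont : Continuous (hfun N) :=
  (((continuous_const.add continuous_norm).inv₀
    (fun x => ne_of_gt (by positivity : (0:ℝ) < 1 + ‖x‖))).smul continuous_id).norm

lemma hfun_nonneg : ∀ x : RN N, 0 ≤ hfun N x := fun _ => norm_nonneg _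

lemma hfun_le_one : ∀ x : RN N, hfun N x ≤ 1 := by
  intro x
  unfold hfun
  rw [norm_smul, Real.norm_eq_abs, abs_of_pos (by positivity : (0:ℝ) < (1+‖x‖)⁻¹)]
  calc (1+‖x‖)⁻¹ * ‖x‖ ≤ (1+‖x‖)⁻¹ * (1+‖x‖) :=
        mul_le_mul_of_nonneg_left (by linarith [norm_nonneg x]) (by positivity)
    _ = 1 := inv_mul_cancel₀ (by positivity)


/-- Lemma 5.3: existence of boundary and interior points of `𝓗` at which the
barycenter of `(√k₁ ϑ_{δ,y}, √k₂ ϑ_{δ,y})` vanishes, with the corresponding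
concentration conditions. -/
theorem statement17 (N : ℕ) (hN : 5 ≤ N) (μ1 μ2 β : ℝ)
    (hμ1 : 0 < μ1) (hμ2 : 0 < μ2) (hβ : max μ1 μ2 < β)
    (ϑ : RN N → ℝ) (hϑ : ThetaGood ϑ)
    (r δ1 δ2 : ℝ) (hr : 0 < r) (hδ1 : 0 < δ1) (hδ1' : δ1 < 1 / 2) (hδ2 : 1 / 2 < δ2)
    (h1 : ∀ y : RN N, conc μ1 μ2 β
        (fun x => sqk1 μ1 μ2 β * thetaScaled ϑ δ1 y x)
        (fun x => sqk2 μ1 μ2 β * thetaScaled ϑ δ1 y x) < 1 / 2)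
    (h2 : ∀ y : RN N, ‖y‖ ≤ r → 1 / 2 < conc μ1 μ2 β
        (fun x => sqk1 μ1 μ2 β * thetaScaled ϑ δ2 y x)
        (fun x => sqk2 μ1 μ2 β * thetaScaled ϑ δ2 y x)) :
    (∃ δt : ℝ, ∃ yt : RN N, onBoundaryH δ1 δ2 r δt yt ∧
      bary μ1 μ2 β
        (fun x => sqk1 μ1 μ2 β * thetaScaled ϑ δt yt x)
        (fun x => sqk2 μ1 μ2 β * thetaScaled ϑ δt yt x) = 0 ∧
      1 / 2 < conc μ1 μ2 β
        (fun x => sqk1 μ1 μ2 β * thetaScaled ϑ δt yt x)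
        (fun x => sqk2 μ1 μ2 β * thetaScaled ϑ δt yt x)) ∧
    (∃ δb : ℝ, ∃ yb : RN N, δ1 < δb ∧ δb < δ2 ∧ ‖yb‖ < r ∧
      bary μ1 μ2 β
        (fun x => sqk1 μ1 μ2 β * thetaScaled ϑ δb yb x)
        (fun x => sqk2 μ1 μ2 β * thetaScaled ϑ δb yb x) = 0 ∧
      conc μ1 μ2 β
        (fun x => sqk1 μ1 μ2 β * thetaScaled ϑ δb yb x)
        (fun x => sqk2 μ1 μ2 β * thetaScaled ϑ δb yb x) = 1 / 2) := by

  classical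
  obtain ⟨hsm, hcsupp, hsuppb, hnn, g, hg, hganti⟩ := hϑ
  have hcont : Continuous ϑ := hsm.continuous
  have hN' : (5:ℝ) ≤ (N:ℝ) := by exact_mod_cast hN
  have ht : 0 < tstar N := by
    unfold tstar; apply div_pos <;> linarith
  have ha : -(((N : ℝ) - 2) / 2) ≤ 0 := by linarith
  have hβ1 : μ1 < β := (le_max_left μ1 μ2).trans_lt hβ
  have hβ2 : μ2 < β := (le_max_right μ1 μ2).trans_lt hβ
  have hβ0 : 0 < β := lt_trans hμ1 hβ1
  have hdd : 0 < β^2 - μ1*μ2 := by nlinarith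
  have hc1 : 0 < sqk1 μ1 μ2 β := by
    rw [sqk1]; exact Real.sqrt_pos.2 (div_pos (by linarith) hdd)
  have hc2 : 0 < sqk2 μ1 μ2 β := by
    rw [sqk2]; exact Real.sqrt_pos.2 (div_pos (by linarith) hdd)
  set c1 := sqk1 μ1 μ2 β with hc1def
  set c2 := sqk2 μ1 μ2 β with hc2def
  -- theta facts
  have hsupp1 : ∀ z : RN N, 1 ≤ ‖z‖ → ϑ z = 0 := by
    intro z hz
    apply image_eq_zero_of_notMem_tsupport
    intro hmem
    have := hsuppb hmem
    rw [mem_ball, dist_zero_right] at this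
    linarith
  have hθ00 : ϑ 0 = g 0 := by rw [hg 0, norm_zero]
  have hθ0pos : 0 < ϑ 0 := by
    set e : RN N := EuclideanSpace.single (⟨0, by omega⟩ : Fin N) (1:ℝ) with he
    have hne : ‖e‖ = 1 := by rw [he, EuclideanSpace.norm_single]; norm_num
    have he0 : ϑ e = 0 := hsupp1 e (le_of_eq hne.symm)
    have h1' : ϑ e = g 1 := by rw [hg e, hne]
    have hlt : g 1 < g 0 := hganti (Set.mem_Icc.2 ⟨le_refl 0, zero_le_one⟩)
      (Set.mem_Icc.2 ⟨zero_le_one, le_refl 1⟩) zero_lt_one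
    linarith
  have hθle : ∀ z, ϑ z ≤ ϑ 0 := by
    intro z
    by_cases hz : 1 ≤ ‖z‖
    · rw [hsupp1 z hz]; exact hθ0pos.le
    · push_neg at hz
      have hle : g ‖z‖ ≤ g 0 := hganti.antitoneOn
        (Set.mem_Icc.2 ⟨le_refl 0, zero_le_one⟩)
        (Set.mem_Icc.2 ⟨norm_nonneg z, hz.le⟩) (norm_nonneg z)
      rw [hg z]; linarith
  have heven : ∀ z : RN N, ϑ (-z) = ϑ z := fun z => by rw [hg, hg, norm_neg]
  have hueven : ∀ δ : ℝ, ∀ x : RN N, thetaScaled ϑ δ 0 (-x) = thetaScaled ϑ δ 0 x := by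
    intro δ x
    unfold thetaScaled
    rw [sub_zero, sub_zero, smul_neg, heven]
  have hbary : ∀ δ : ℝ, bary μ1 μ2 β (fun x => c1 * thetaScaled ϑ δ 0 x)
      (fun x => c2 * thetaScaled ϑ δ 0 x) = 0 := fun δ =>
    bary_zero (fun x => by rw [hueven]) (fun x => by rw [hueven])
  have hρ : ∀ δ : ℝ, 0 < δ → ∀ x, rhoF μ1 μ2 β (fun x => c1 * thetaScaled ϑ δ 0 x)
      (fun x => c2 * thetaScaled ϑ δ 0 x) x
        = G0 μ1 μ2 β c1 c2 (tstar N) (thetaScaled ϑ δ 0 x) := by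
    intro δ hδ x
    have hw := ts_nonneg hnn hδ x
    simp only [rhoF, posp, G0]
    rw [max_eq_left (mul_nonneg hc1.le hw), max_eq_left (mul_nonneg hc2.le hw)]
  -- conc as explicit ratio
  have hconc : ∀ δ : ℝ, 0 < δ →
      conc μ1 μ2 β (fun x => c1 * thetaScaled ϑ δ 0 x) (fun x => c2 * thetaScaled ϑ δ 0 x)
        = (∫ x, hfun N x * G0 μ1 μ2 β c1 c2 (tstar N) (thetaScaled ϑ δ 0 x))
          / (∫ x, (fun _ : RN N => (1:ℝ)) x * G0 μ1 μ2 β c1 c2 (tstar N) (thetaScaled ϑ δ 0 x)) := by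
    intro δ hδ
    unfold conc
    rw [hbary δ]
    congr 1
    · apply integral_congr_ae (Eventually.of_forall fun x => ?_)
      rw [sub_zero, hρ δ hδ x]
      rfl
    · apply integral_congr_ae (Eventually.of_forall fun x => ?_)
      rw [hρ δ hδ x, one_mul]
  -- continuity
  have hfcont : ContinuousOn (fun δ => conc μ1 μ2 β (fun x => c1 * thetaScaled ϑ δ 0 x)
      (fun x => c2 * thetaScaled ϑ δ 0 x)) (Set.Icc δ1 δ2) := by
    apply ContinuousOn.congr (f := fun δ =>
        (∫ x, hfun N x * G0 μ1 μ2 β c1 c2 (tstar N) (thetaScaled ϑ δ 0 x))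
          / (∫ x, (fun _ : RN N => (1:ℝ)) x * G0 μ1 μ2 β c1 c2 (tstar N) (thetaScaled ϑ δ 0 x)))
    · intro δ0 hδ0
      have hδ0pos : 0 < δ0 := lt_of_lt_of_le hδ1 hδ0.1
      have hNum := cont_aux hcont hnn hθle hsupp1 ha hμ1.le hμ2.le hβ0.le hc1.le hc2.le ht
        (hfun_cont) (hfun_nonneg) (hfun_le_one) hδ0pos
      have hDen := cont_aux hcont hnn hθle hsupp1 ha hμ1.le hμ2.le hβ0.le hc1.le hc2.le ht
        (continuous_const : Continuous fun _ : RN N => (1:ℝ))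
        (fun _ => zero_le_one) (fun _ => le_refl 1) hδ0pos
      have hdne : (∫ x, (fun _ : RN N => (1:ℝ)) x
          * G0 μ1 μ2 β c1 c2 (tstar N) (thetaScaled ϑ δ0 0 x)) ≠ 0 := by
        simp only [one_mul]
        exact (den_pos hcont hnn hθ0pos hsupp1 hμ1 hμ2.le hβ0.le hc1 hc2.le ht hδ0pos).ne'
      exact (hNum.div hDen hdne).continuousWithinAt
    · intro δ hδ
      exact hconc δ (lt_of_lt_of_le hδ1 hδ.1)
  -- endpoints
  have hr0 : ‖(0 : RN N)‖ ≤ r := by simpa using hr.le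
  have hf1 : conc μ1 μ2 β (fun x => c1 * thetaScaled ϑ δ1 0 x)
      (fun x => c2 * thetaScaled ϑ δ1 0 x) < 1/2 := h1 0
  have hf2 : 1/2 < conc μ1 μ2 β (fun x => c1 * thetaScaled ϑ δ2 0 x)
      (fun x => c2 * thetaScaled ϑ δ2 0 x) := h2 0 hr0
  obtain ⟨δb, hδbmem, hδbeq⟩ := intermediate_value_Ioo
    (show δ1 ≤ δ2 by linarith) hfcont (Set.mem_Ioo.2 ⟨hf1, hf2⟩)
  refine ⟨⟨δ2, 0, Or.inl ⟨Or.inr rfl, hr0⟩, hbary δ2, hf2⟩,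
    ⟨δb, 0, hδbmem.1, hδbmem.2, by simpa using hr, hbary δb, hδbeq⟩⟩
end
end
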